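/- arXiv:1906.07129 — 12 statements merged into one kernel-verified Lean document; each statement's English description precedes it below -/
import Mathlib

section
/- For λ ∈ ℂ* and α ∈ ℂ, the action on ℂ[x] defined by L_m · f(x) = λ^m (x + mα) f(x+m) for m ∈ ℤ makes ℂ[x] a module over the Witt algebra W (the Lie algebra with basis {L_n : n ∈ ℤ} and bracket [L_m, L_n] = (m−n) L_{m+n}), i.e., the defining relations [L_m, L_n]·f = L_m·(L_n·f) − L_n·(L_m·f) hold for all m, n ∈ ℤ and f ∈ ℂ[x]. -/
open Polynomial

/-- The Witt algebra action on `Ω(λ, α) = ℂ[x]`: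
`L_m · f(x) = λ^m (x + mα) f(x+m)`. -/
noncomputable def l0 (l a : ℂ) (m : ℤ) (f : Polynomial ℂ) : Polynomial ℂ :=
  l ^ m • ((X + C ((m : ℂ) * a)) * f.comp (X + C (m : ℂ)))

/-- for `λ ∈ ℂ*`, `α ∈ ℂ`, the action `L_m · f(x) = λ^m (x+mα) f(x+m)` makes
`ℂ[x]` a module over the Witt algebra, i.e. the defining relations
`[L_m, L_n]·f = L_m·(L_n·f) − L_n·(L_m·f)` hold, where `[L_m, L_n] = (m−n) L_{m+n}`. -/
theorem witt_module_relations (l a : ℂ) (hl : l ≠ 0) (m n : ℤ) (f : Polynomial ℂ) :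
    l0 l a m (l0 l a n f) - l0 l a n (l0 l a m f)
      = ((m - n : ℤ) : ℂ) • l0 l a (m + n) f := by
  simp only [l0, smul_comp, mul_comp, add_comp, X_comp, C_comp, comp_assoc,
    smul_smul, ← zpow_add₀ hl, smul_mul_assoc, mul_smul_comm]
  rw [show n + m = m + n from add_comm n m,
    show (X + C (n:ℂ) + C (m:ℂ)) = X + C (m:ℂ) + C (n:ℂ) by ring,
    show ((m - n : ℤ) : ℂ) * l ^ (m + n) = l ^ (m + n) * ((m - n : ℤ) : ℂ) from mul_comm _ _,
    mul_smul]
  simp only [smul_eq_C_mul, Int.cast_add, Int.cast_sub, C_add, C_sub, C_mul]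
  ring
end

section
/- The Witt-algebra module Ω(λ, α) = ℂ[x] with action L_m · f(x) = λ^m (x + mα) f(x+m) is simple if and only if α ≠ 0 (where λ ∈ ℂ*). Moreover, when α = 0, the subspace x·ℂ[x] is the unique nonzero proper submodule of Ω(λ, 0), and it has codimension 1. -/
open Polynomial

/-- The subspace `x·ℂ[x]` of `ℂ[x]`, i.e. polynomials vanishing at `0`. -/
noncomputable def XPoly : Submodule ℂ (Polynomial ℂ) where
  carrier := {p | p.eval 0 = 0}
  add_mem' := by intro a b ha hb; simp_all
  zero_mem' := by simp
  smul_mem' := by intro c p hp; simp_all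

lemma mem_XPoly (f : Polynomial ℂ) : f ∈ XPoly ↔ f.eval 0 = 0 := Iff.rfl

/-- An invariant submodule is closed under multiplication by arbitrary polynomials. -/
lemma mul_mem_of_inv (l a : ℂ) (W : Submodule ℂ (Polynomial ℂ))
    (hW : ∀ (m : ℤ) (f : Polynomial ℂ), f ∈ W → l0 l a m f ∈ W) :
    ∀ (p f : Polynomial ℂ), f ∈ W → p * f ∈ W := by
  have hX : ∀ f ∈ W, X * f ∈ W := by
    intro f hf
    have h := hW 0 f hf
    simpa [l0] using h
  intro p f hf
  induction p using Polynomial.induction_on with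
  | C c => simpa [smul_eq_C_mul] using W.smul_mem c hf
  | add p q hp hq => simpa [add_mul] using W.add_mem hp hq
  | monomial n c ih =>
    have h2 : C c * X ^ (n + 1) * f = X * (C c * X ^ n * f) := by ring
    rw [h2]; exact hX _ ih

/-- An invariant submodule is closed under the unscaled shift operators. -/
lemma shift_mem (l a : ℂ) (hl : l ≠ 0) (W : Submodule ℂ (Polynomial ℂ))
    (hW : ∀ (m : ℤ) (f : Polynomial ℂ), f ∈ W → l0 l a m f ∈ W) :
    ∀ (m : ℤ) (f : Polynomial ℂ), f ∈ W →
      (X + C ((m : ℂ) * a)) * f.comp (X + C (m : ℂ)) ∈ W := by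
  intro m f hf
  have h1 := hW m f hf
  have h2 := W.smul_mem ((l ^ m)⁻¹) h1
  rwa [l0, smul_smul, inv_mul_cancel₀ (zpow_ne_zero m hl), one_smul] at h2

/-- An invariant submodule is an ideal, hence principal. -/
lemma exists_gen (W : Submodule ℂ (Polynomial ℂ))
    (hmul : ∀ (p f : Polynomial ℂ), f ∈ W → p * f ∈ W) :
    ∃ g : Polynomial ℂ, ∀ f, f ∈ W ↔ g ∣ f := by
  let J : Ideal (Polynomial ℂ) :=
    { carrier := W
      add_mem' := fun ha hb => W.add_mem ha hb
      zero_mem' := W.zero_mem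
      smul_mem' := fun p f hf => by simpa [smul_eq_mul] using hmul p f hf }
  obtain ⟨g, hg⟩ := Submodule.IsPrincipal.principal J
  refine ⟨g, fun f => ?_⟩
  have h1 : f ∈ W ↔ f ∈ J := Iff.rfl
  have h2 : f ∈ J ↔ g ∣ f := by rw [hg]; exact Ideal.mem_span_singleton
  exact h1.trans h2

lemma roots_finite_nat (g : Polynomial ℂ) (hg : g ≠ 0) (r : ℂ) :
    {m : ℕ | g.eval (r + m) = 0}.Finite := by
  have h1 : {x : ℂ | g.IsRoot x}.Finite := Polynomial.finite_setOf_isRoot hg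
  have h2 : Set.InjOn (fun m : ℕ => r + (m : ℂ)) ((fun m : ℕ => r + (m : ℂ)) ⁻¹' {x | g.IsRoot x}) := by
    intro m1 _ m2 _ h
    have : (m1 : ℂ) = m2 := by simpa using h
    exact_mod_cast this
  have h3 := h1.preimage h2
  exact h3.subset (fun m hm => hm)

lemma isUnit_of_no_root (g : Polynomial ℂ) (hg : g ≠ 0) (h : ∀ r, g.eval r ≠ 0) :
    IsUnit g := by
  by_contra hnu
  have hdeg : 0 < g.degree := by
    rw [← Polynomial.natDegree_pos_iff_degree_pos]
    rcases Nat.eq_zero_or_pos g.natDegree with h0 | h0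
    · obtain ⟨c, rfl⟩ := Polynomial.natDegree_eq_zero.mp h0
      exact absurd (Polynomial.isUnit_C.mpr (isUnit_iff_ne_zero.mpr
        (fun hc => hg (by simp [hc])))) hnu
    · exact h0
  obtain ⟨r, hr⟩ := Complex.exists_root hdeg
  exact h r hr

/-- Simplicity when `a ≠ 0`. -/
lemma simple_of_ne (l a : ℂ) (hl : l ≠ 0) (ha : a ≠ 0) (W : Submodule ℂ (Polynomial ℂ))
    (hW : ∀ (m : ℤ) (f : Polynomial ℂ), f ∈ W → l0 l a m f ∈ W) : W = ⊥ ∨ W = ⊤ := by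
  by_cases hbot : W = ⊥
  · exact Or.inl hbot
  right
  obtain ⟨g, hg⟩ := exists_gen W (mul_mem_of_inv l a W hW)
  have hg0 : g ≠ 0 := by
    intro h0
    apply hbot
    rw [Submodule.eq_bot_iff]
    intro f hf
    exact zero_dvd_iff.mp (h0 ▸ (hg f).mp hf)
  have hgW : g ∈ W := (hg g).mpr dvd_rfl
  have hdvd : ∀ m : ℕ, g ∣ (X + C ((m : ℂ) * a)) * g.comp (X + C (m : ℂ)) := by
    intro m
    have h1 := shift_mem l a hl W hW (m : ℤ) g hgW
    have h2 := (hg _).mp h1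
    simpa using h2
  -- g has no roots
  have hnr : ∀ r, g.eval r ≠ 0 := by
    intro r hr
    have key : ∀ m : ℕ, (r + (m : ℂ) * a) * g.eval (r + m) = 0 := by
      intro m
      obtain ⟨q, hq⟩ := hdvd m
      have := congrArg (Polynomial.eval r) hq
      simpa [eval_comp, hr] using this
    have hA : {m : ℕ | g.eval (r + m) = 0}.Finite := roots_finite_nat g hg0 r
    have hB : {m : ℕ | r + (m : ℂ) * a = 0}.Finite := by
      apply Set.Subsingleton.finite
      intro m1 h1 m2 h2
      have : (m1 : ℂ) * a = (m2 : ℂ) * a := by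
        have hh1 : r + (m1 : ℂ) * a = 0 := h1
        have hh2 : r + (m2 : ℂ) * a = 0 := h2
        linear_combination hh1 - hh2
      have : (m1 : ℂ) = m2 := mul_right_cancel₀ ha this
      exact_mod_cast this
    have hsub : Set.univ ⊆ {m : ℕ | g.eval (r + m) = 0} ∪ {m : ℕ | r + (m : ℂ) * a = 0} := by
      intro m _
      rcases mul_eq_zero.mp (key m) with h | h
      · exact Or.inr h
      · exact Or.inl h
    exact Set.infinite_univ ((hA.union hB).subset hsub)
  have hu : IsUnit g := isUnit_of_no_root g hg0 hnr
  rw [Submodule.eq_top_iff']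
  intro f
  exact (hg f).mpr (hu.dvd)

/-- When `a = 0`, the unique proper nonzero invariant submodule is `XPoly`. -/
lemma eq_XPoly (l : ℂ) (hl : l ≠ 0) (W : Submodule ℂ (Polynomial ℂ))
    (hW : ∀ (m : ℤ) (f : Polynomial ℂ), f ∈ W → l0 l 0 m f ∈ W)
    (hbot : W ≠ ⊥) (htop : W ≠ ⊤) : W = XPoly := by
  obtain ⟨g, hg⟩ := exists_gen W (mul_mem_of_inv l 0 W hW)
  have hg0 : g ≠ 0 := by
    intro h0
    apply hbot
    rw [Submodule.eq_bot_iff]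
    intro f hf
    exact zero_dvd_iff.mp (h0 ▸ (hg f).mp hf)
  have hgW : g ∈ W := (hg g).mpr dvd_rfl
  have hnu : ¬ IsUnit g := by
    intro hu
    apply htop
    rw [Submodule.eq_top_iff']
    intro f
    exact (hg f).mpr hu.dvd
  have hdvd : ∀ m : ℕ, g ∣ X * g.comp (X + C (m : ℂ)) := by
    intro m
    have h1 := shift_mem l 0 hl W hW (m : ℤ) g hgW
    have h2 := (hg _).mp h1
    simpa using h2
  -- every root of g is 0
  have hroot0 : ∀ r, g.eval r = 0 → r = 0 := by
    intro r hr
    by_contra hr0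
    have hsub : Set.univ ⊆ {m : ℕ | g.eval (r + m) = 0} := by
      intro m _
      obtain ⟨q, hq⟩ := hdvd m
      have := congrArg (Polynomial.eval r) hq
      simp only [eval_mul, eval_comp, eval_add, eval_X, eval_C, hr, zero_mul] at this
      rcases mul_eq_zero.mp this with h | h
      · exact absurd h hr0
      · exact h
    exact Set.infinite_univ ((roots_finite_nat g hg0 r).subset hsub)
  -- 0 is a root of g
  have hdegpos : 0 < g.degree := by
    rw [← Polynomial.natDegree_pos_iff_degree_pos]
    rcases Nat.eq_zero_or_pos g.natDegree with h0 | h0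
    · obtain ⟨c, rfl⟩ := Polynomial.natDegree_eq_zero.mp h0
      exact absurd (Polynomial.isUnit_C.mpr (isUnit_iff_ne_zero.mpr
        (fun hc => hg0 (by simp [hc])))) hnu
    · exact h0
  have hg00 : g.eval 0 = 0 := by
    obtain ⟨r, hr⟩ := Complex.exists_root hdegpos
    have := hroot0 r hr
    rwa [this] at hr
  have hXdvd : X ∣ g := Polynomial.X_dvd_iff.mpr
    (by rwa [Polynomial.coeff_zero_eq_eval_zero])
  obtain ⟨g₁, rfl⟩ := hXdvd
  have hg₁0 : g₁ ≠ 0 := fun h => hg0 (by simp [h])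
  -- g₁ has no roots
  have hg₁nr : ∀ s, g₁.eval s ≠ 0 := by
    intro s hs
    have hs0 : s = 0 := hroot0 s (by simp [hs])
    subst hs0
    have hsub : {m : ℕ | 1 ≤ m} ⊆ {m : ℕ | g₁.eval ((0 : ℂ) + m) = 0} := by
      intro m hm
      have hd := hdvd m
      have hcomp : (X * g₁).comp (X + C (m : ℂ)) =
          (X + C (m : ℂ)) * g₁.comp (X + C (m : ℂ)) := by
        simp [mul_comp]
      rw [hcomp] at hd
      have hd2 : g₁ ∣ (X + C (m : ℂ)) * g₁.comp (X + C (m : ℂ)) :=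
        (mul_dvd_mul_iff_left (Polynomial.X_ne_zero (R := ℂ))).mp hd
      obtain ⟨q, hq⟩ := hd2
      have := congrArg (Polynomial.eval 0) hq
      simp only [eval_mul, eval_comp, eval_add, eval_X, eval_C, hs, zero_mul, zero_add] at this
      rcases mul_eq_zero.mp this with h | h
      · exact absurd h (by exact_mod_cast Nat.one_le_iff_ne_zero.mp hm)
      · simpa using h
    have hIci : ({m : ℕ | 1 ≤ m}).Infinite := by
      have := Set.Ici_infinite (1 : ℕ)
      simpa [Set.Ici] using this
    exact hIci ((roots_finite_nat g₁ hg₁0 0).subset hsub)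
  have hu : IsUnit g₁ := isUnit_of_no_root g₁ hg₁0 hg₁nr
  ext f
  rw [hg f, mem_XPoly, hu.mul_right_dvd,
    ← Polynomial.coeff_zero_eq_eval_zero, Polynomial.X_dvd_iff]

/-- `Ω(λ, α)` is a simple module over the Witt algebra iff `α ≠ 0`;
moreover `x·ℂ[x]` is the unique nonzero proper submodule of `Ω(λ, 0)`, of codimension 1. -/
theorem omega_simple_iff (l a : ℂ) (hl : l ≠ 0) :
    ((∀ W : Submodule ℂ (Polynomial ℂ),
        (∀ (m : ℤ) (f : Polynomial ℂ), f ∈ W → l0 l a m f ∈ W) → W = ⊥ ∨ W = ⊤) ↔ a ≠ 0)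
    ∧ (∀ (m : ℤ) (f : Polynomial ℂ), f ∈ XPoly → l0 l 0 m f ∈ XPoly)
    ∧ (∀ W : Submodule ℂ (Polynomial ℂ),
        (∀ (m : ℤ) (f : Polynomial ℂ), f ∈ W → l0 l 0 m f ∈ W) →
          W ≠ ⊥ → W ≠ ⊤ → W = XPoly)
    ∧ Module.finrank ℂ (Polynomial ℂ ⧸ XPoly) = 1 := by
  have hinv : ∀ (m : ℤ) (f : Polynomial ℂ), f ∈ XPoly → l0 l 0 m f ∈ XPoly := by
    intro m f hf
    rw [mem_XPoly, l0]
    simp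
  have hXbot : XPoly ≠ ⊥ := by
    intro h
    have hX : (X : Polynomial ℂ) ∈ XPoly := by rw [mem_XPoly]; simp
    rw [h, Submodule.mem_bot] at hX
    exact Polynomial.X_ne_zero hX
  have hXtop : XPoly ≠ ⊤ := by
    intro h
    have h1 : (1 : Polynomial ℂ) ∈ XPoly := h ▸ Submodule.mem_top
    rw [mem_XPoly] at h1
    simp at h1
  refine ⟨⟨?_, fun ha W hW => simple_of_ne l a hl ha W hW⟩, hinv, fun W hW => eq_XPoly l hl W hW, ?_⟩
  · intro hsimp
    intro ha0
    subst ha0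
    rcases hsimp XPoly hinv with h | h
    · exact hXbot h
    · exact hXtop h
  · have hker : XPoly = LinearMap.ker (Polynomial.leval (0 : ℂ)) := by
      ext p
      rw [mem_XPoly, LinearMap.mem_ker, Polynomial.leval_apply]
    rw [hker]
    have hsurj : Function.Surjective (Polynomial.leval (0 : ℂ)) := fun c =>
      ⟨C c, by simp [Polynomial.leval_apply]⟩
    rw [(LinearMap.quotKerEquivOfSurjective _ hsurj).finrank_eq]
    exact Module.finrank_self ℂ
end

section
/- Any module M over the Witt algebra W that, when restricted to U(ℂL_0), is a free ℂ[L_0]-module of rank 1 is isomorphic to Ω(λ, α) for some λ ∈ ℂ* and α ∈ ℂ, where Ω(λ, α) = ℂ[x] with L_m acting by f(x) ↦ λ^m (x + mα) f(x+m). -/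
open Polynomial

/-- A representation of the Witt algebra `W` (basis `L_n`, `[L_m,L_n]=(m−n)L_{m+n}`)
on a complex vector space `M`. -/
structure WittRep (M : Type*) [AddCommGroup M] [Module ℂ M] where
  L : ℤ → M →ₗ[ℂ] M
  comm : ∀ (m n : ℤ) (v : M),
    L m (L n v) - L n (L m v) = ((m - n : ℤ) : ℂ) • L (m + n) v

/-!
Transporting the action along `ℂ[X] ≃ M`, `f ↦ f(L_0) v`, turns `L_0` into multiplication by
`X`. Then `[L_m, L_0] = m L_m` forces `L_m f = g_m · f(X + m)` with `g_m = L_m 1`, and the Witt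
relations become `g_m g_n(X + m) - g_n g_m(X + n) = (m - n) g_{m+n}`, `g_0 = X`. The top
coefficient of the left side cancels, so `deg g_{m+n} < deg g_m + deg g_n`, and the next one is
`lc(g_m) lc(g_n) (m deg g_n - n deg g_m)`. For `n = -m` this gives `deg g_m + deg g_{-m} = 2`,
and the relations `(1, -2)`, `(2, -1)` then force `g_1 = λ (X + α)` to be linear. As that
second coefficient is a nonzero multiple of the unknown's leading coefficient in the relations
`(m + 1, -1)` and `(1, -m - 1)`, they determine `g_{m+1}` from `g_m` and `g_{-m-1}` from
`g_{-m}`, so `g` is the family `λ^m (X + mα)` of `Ω(λ, α)`.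
-/

section ShiftBracket

variable {R : Type*} [CommRing R]

/-- If `A f = a * f(X + s)` and `B f = b * f(X + t)`, then
`(A B - B A) f = shiftBracket s t a b * f(X + s + t)`. -/
noncomputable def shiftBracket (s t : R) (a b : R[X]) : R[X] :=
  a * b.comp (X + C s) - b * a.comp (X + C t)

theorem shiftBracket_eq_mul_taylor_sub (s t : R) (a b : R[X]) :
    shiftBracket s t a b = a * (taylor s b - b) - b * (taylor t a - a) := by
  simp only [shiftBracket, taylor_apply]
  ring

theorem shiftBracket_sub_left (s t : R) (a a' b : R[X]) :
    shiftBracket s t a b - shiftBracket s t a' b = shiftBracket s t (a - a') b := by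
  simp only [shiftBracket, sub_comp]
  ring

theorem shiftBracket_sub_right (s t : R) (a b b' : R[X]) :
    shiftBracket s t a b - shiftBracket s t a b' = shiftBracket s t a (b - b') := by
  simp only [shiftBracket, sub_comp]
  ring

theorem coeff_taylor_of_natDegree_le (s : R) (b : R[X]) {k : ℕ} (hk : b.natDegree ≤ k) :
    (taylor s b).coeff k = b.coeff k := by
  have hconst : (hasseDeriv k b).natDegree = 0 := by
    have := natDegree_hasseDeriv_le b k
    omega
  rw [taylor_coeff, eq_C_of_natDegree_eq_zero hconst, eval_C, hasseDeriv_coeff, zero_add,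
    Nat.choose_self, Nat.cast_one, one_mul]

theorem taylor_sub_self_of_natDegree_eq_zero (s : R) {b : R[X]} (hb : b.natDegree = 0) :
    taylor s b - b = 0 := by
  rw [eq_C_of_natDegree_eq_zero hb, taylor_C, sub_self]

theorem natDegree_taylor_sub_self_le (s : R) (b : R[X]) :
    (taylor s b - b).natDegree ≤ b.natDegree - 1 := by
  rw [natDegree_le_iff_coeff_eq_zero]
  intro k hk
  rw [coeff_sub, coeff_taylor_of_natDegree_le s b (by omega), sub_self]

theorem coeff_taylor_sub_self_natDegree_sub_one (s : R) (b : R[X]) :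
    (taylor s b - b).coeff (b.natDegree - 1) = b.natDegree * s * b.leadingCoeff := by
  rcases eq_or_ne b.natDegree 0 with hd | hd
  · simp [taylor_sub_self_of_natDegree_eq_zero s hd, hd]
  · obtain ⟨d, hd⟩ := Nat.exists_eq_add_one_of_ne_zero hd
    have hlin : (hasseDeriv d b).natDegree ≤ 1 := by
      have := natDegree_hasseDeriv_le b d
      omega
    rw [hd, Nat.add_sub_cancel, coeff_sub, taylor_coeff, eq_X_add_C_of_natDegree_le_one hlin,
      leadingCoeff, hd]
    simp only [eval_add, eval_mul, eval_C, eval_X, hasseDeriv_coeff, zero_add, Nat.choose_self,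
      add_comm 1 d, Nat.choose_succ_self_right]
    push_cast
    ring

theorem natDegree_mul_taylor_sub_self_le (s : R) (a b : R[X]) :
    (a * (taylor s b - b)).natDegree ≤ a.natDegree + b.natDegree - 1 := by
  rcases Nat.eq_zero_or_pos b.natDegree with hd | hd
  · simp [taylor_sub_self_of_natDegree_eq_zero s hd]
  · have := natDegree_taylor_sub_self_le s b
    have := natDegree_mul_le (p := a) (q := taylor s b - b)
    omega

theorem coeff_mul_taylor_sub_self (s : R) (a b : R[X]) :
    (a * (taylor s b - b)).coeff (a.natDegree + b.natDegree - 1) =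
      a.leadingCoeff * (b.natDegree * s * b.leadingCoeff) := by
  rcases Nat.eq_zero_or_pos b.natDegree with hd | hd
  · simp [taylor_sub_self_of_natDegree_eq_zero s hd, hd]
  · rw [show a.natDegree + b.natDegree - 1 = a.natDegree + (b.natDegree - 1) by omega,
      coeff_mul_add_eq_of_natDegree_le le_rfl (natDegree_taylor_sub_self_le s b),
      coeff_taylor_sub_self_natDegree_sub_one]
    rfl

theorem natDegree_shiftBracket_le (s t : R) (a b : R[X]) :
    (shiftBracket s t a b).natDegree ≤ a.natDegree + b.natDegree - 1 := by
  rw [shiftBracket_eq_mul_taylor_sub]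
  refine (natDegree_sub_le _ _).trans (max_le (natDegree_mul_taylor_sub_self_le s a b) ?_)
  rw [add_comm]
  exact natDegree_mul_taylor_sub_self_le t b a

theorem coeff_shiftBracket (s t : R) (a b : R[X]) :
    (shiftBracket s t a b).coeff (a.natDegree + b.natDegree - 1) =
      a.leadingCoeff * b.leadingCoeff * (s * b.natDegree - t * a.natDegree) := by
  rw [shiftBracket_eq_mul_taylor_sub, coeff_sub, coeff_mul_taylor_sub_self, add_comm a.natDegree,
    coeff_mul_taylor_sub_self]
  ring

variable [IsDomain R] {s t : R} {a a' b b' : R[X]}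

theorem mul_natDegree_eq_of_shiftBracket_eq_zero (ha : a ≠ 0) (hb : b ≠ 0)
    (h : shiftBracket s t a b = 0) : s * b.natDegree = t * a.natDegree := by
  have hcoeff := coeff_shiftBracket s t a b
  rw [h, coeff_zero, eq_comm, mul_eq_zero, sub_eq_zero] at hcoeff
  exact hcoeff.resolve_left (mul_ne_zero (leadingCoeff_ne_zero.mpr ha)
    (leadingCoeff_ne_zero.mpr hb))

theorem eq_of_shiftBracket_eq_left (hb : b ≠ 0) (hst : ∀ k : ℕ, s * b.natDegree ≠ t * k)
    (h : shiftBracket s t a b = shiftBracket s t a' b) : a = a' := by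
  by_contra hne
  refine hst (a - a').natDegree (mul_natDegree_eq_of_shiftBracket_eq_zero
    (sub_ne_zero.mpr hne) hb ?_)
  rw [← shiftBracket_sub_left, h, sub_self]

theorem eq_of_shiftBracket_eq_right (ha : a ≠ 0) (hst : ∀ k : ℕ, s * k ≠ t * a.natDegree)
    (h : shiftBracket s t a b = shiftBracket s t a b') : b = b' := by
  by_contra hne
  refine hst (b - b').natDegree (mul_natDegree_eq_of_shiftBracket_eq_zero
    ha (sub_ne_zero.mpr hne) ?_)
  rw [← shiftBracket_sub_right, h, sub_self]

end ShiftBracket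

/-- `g m` plays the role of `L_m 1` for a Witt action on `ℂ[X]` in which `L_0` is
multiplication by `X`, so that `L_m f = g m * f(X + m)`. -/
def IsWittFamily (g : ℤ → ℂ[X]) : Prop :=
  ∀ m n : ℤ, shiftBracket (m : ℂ) n (g m) (g n) = ((m : ℂ) - n) • g (m + n)

theorem isWittFamily_l0 {l : ℂ} (hl : l ≠ 0) (a : ℂ) : IsWittFamily fun m => l0 l a m 1 := by
  intro m n
  simp only [l0, shiftBracket, one_comp, mul_one, smul_eq_C_mul, mul_comp, add_comp, X_comp,
    C_comp, zpow_add₀ hl, Int.cast_add, C_mul, C_add, C_sub]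
  ring

namespace IsWittFamily

variable {g : ℤ → ℂ[X]} (hg : IsWittFamily g)
include hg

theorem ne_zero (h0 : g 0 = X) (m : ℤ) : g m ≠ 0 := by
  rcases eq_or_ne m 0 with rfl | hm0
  · exact h0 ▸ X_ne_zero
  intro hm
  have h := hg m (-m)
  rw [hm, add_neg_cancel, h0] at h
  simp only [shiftBracket, zero_mul, zero_comp, mul_zero, sub_zero] at h
  refine smul_ne_zero ?_ X_ne_zero h.symm
  rw [Int.cast_neg, sub_neg_eq_add, ← two_mul]
  exact mul_ne_zero two_ne_zero (Int.cast_ne_zero.mpr hm0)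

theorem natDegree_le_of_ne {m n : ℤ} (hmn : m ≠ n) :
    (g (m + n)).natDegree ≤ (g m).natDegree + (g n).natDegree - 1 := by
  have hmn' : (m : ℂ) - n ≠ 0 := sub_ne_zero.mpr (Int.cast_injective.ne hmn)
  rw [← natDegree_smul _ hmn', ← hg]
  exact natDegree_shiftBracket_le _ _ _ _

theorem natDegree_add_natDegree_neg (h0 : g 0 = X) {m : ℤ} (hm : m ≠ 0) :
    (g m).natDegree + (g (-m)).natDegree = 2 := by
  have hlow := hg.natDegree_le_of_ne (m := m) (n := -m) (by omega)
  rw [add_neg_cancel, h0, natDegree_X] at hlow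
  have h2m : (m : ℂ) - (-m : ℤ) ≠ 0 := by
    rw [Int.cast_neg, sub_neg_eq_add, ← two_mul]
    exact mul_ne_zero two_ne_zero (Int.cast_ne_zero.mpr hm)
  have hcoeff := coeff_shiftBracket (m : ℂ) (-m : ℤ) (g m) (g (-m))
  rw [hg, add_neg_cancel, h0] at hcoeff
  have hne : (((m : ℂ) - (-m : ℤ)) • (X : ℂ[X])).coeff
      ((g m).natDegree + (g (-m)).natDegree - 1) ≠ 0 := by
    rw [hcoeff]
    refine mul_ne_zero (mul_ne_zero (leadingCoeff_ne_zero.mpr (hg.ne_zero h0 m))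
      (leadingCoeff_ne_zero.mpr (hg.ne_zero h0 (-m)))) ?_
    rw [Int.cast_neg, neg_mul, sub_neg_eq_add, ← mul_add, ← Nat.cast_add]
    exact mul_ne_zero (Int.cast_ne_zero.mpr hm) (Nat.cast_ne_zero.mpr (by omega))
  have hhigh := le_natDegree_of_ne_zero hne
  rw [natDegree_smul _ h2m, natDegree_X] at hhigh
  omega

theorem natDegree_one (h0 : g 0 = X) : (g 1).natDegree = 1 ∧ (g (-1)).natDegree = 1 := by
  have h1 := hg.natDegree_add_natDegree_neg h0 one_ne_zero
  have h2 := hg.natDegree_add_natDegree_neg h0 two_ne_zero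
  have h12 := hg.natDegree_le_of_ne (m := 1) (n := -2) (by norm_num)
  have h21 := hg.natDegree_le_of_ne (m := 2) (n := -1) (by norm_num)
  norm_num at h12 h21
  omega

theorem eq_of_apply_one_eq {h : ℤ → ℂ[X]} (hh : IsWittFamily h) (hg0 : g 0 = X) (hh0 : h 0 = X)
    (h1 : g 1 = h 1) : g = h := by
  have hd := hh.natDegree_one hh0
  have hneg : g (-1) = h (-1) := by
    refine eq_of_shiftBracket_eq_right (s := ((1 : ℤ) : ℂ)) (t := ((-1 : ℤ) : ℂ))
      (hh.ne_zero hh0 1) (fun k => ?_) ?_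
    · rw [hd.1]
      push_cast
      exact fun hk => Nat.cast_add_one_ne_zero k (by linear_combination hk)
    · rw [← h1, hg, h1, hh]
      simp [hg0, hh0]
  have hnat : ∀ n : ℕ, g n = h n := by
    intro n
    induction n with
    | zero => exact hg0.trans hh0.symm
    | succ n ih =>
      refine eq_of_shiftBracket_eq_left (s := (((n + 1 : ℕ) : ℤ) : ℂ)) (t := ((-1 : ℤ) : ℂ))
        (hh.ne_zero hh0 (-1)) (fun k => ?_) ?_
      · rw [hd.2]
        push_cast
        exact fun hk => Nat.cast_add_one_ne_zero (n + k) (by push_cast; linear_combination hk)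
      · rw [← hneg, hg, hneg, hh, show ((n + 1 : ℕ) : ℤ) + -1 = n by omega, ih]
  have hneg_nat : ∀ n : ℕ, g (-n) = h (-n) := by
    intro n
    induction n with
    | zero => simpa using hg0.trans hh0.symm
    | succ n ih =>
      refine eq_of_shiftBracket_eq_right (s := ((1 : ℤ) : ℂ)) (t := ((-(n + 1 : ℕ) : ℤ) : ℂ))
        (hh.ne_zero hh0 1) (fun k => ?_) ?_
      · rw [hd.1]
        push_cast
        exact fun hk => Nat.cast_add_one_ne_zero (n + k) (by push_cast; linear_combination hk)
      · rw [← h1, hg, h1, hh, show 1 + -((n + 1 : ℕ) : ℤ) = -n by omega, ih]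
  funext m
  obtain ⟨n, rfl | rfl⟩ := m.eq_nat_or_neg
  exacts [hnat n, hneg_nat n]

theorem exists_eq_l0 (h0 : g 0 = X) : ∃ l, l ≠ 0 ∧ ∃ a, ∀ m, g m = l0 l a m 1 := by
  have hd := (hg.natDegree_one h0).1
  have hg1 : g 1 = C (g 1).leadingCoeff * X + C ((g 1).coeff 0) := by
    rw [leadingCoeff, hd]
    exact eq_X_add_C_of_natDegree_le_one hd.le
  set l := (g 1).leadingCoeff
  set c := (g 1).coeff 0
  have hl : l ≠ 0 := leadingCoeff_ne_zero.mpr (hg.ne_zero h0 1)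
  refine ⟨l, hl, c / l, congrFun
    (hg.eq_of_apply_one_eq (isWittFamily_l0 hl _) h0 (by simp [l0]) ?_)⟩
  simp [hg1, l0, smul_eq_C_mul, ← C_mul, mul_div_cancel₀ c hl]

end IsWittFamily

theorem LinearMap.apply_eq_mul_comp_of_apply_X_mul {R : Type*} [CommRing R]
    (T : R[X] →ₗ[R] R[X]) (s : R) (hT : ∀ f, T (X * f) = (X + C s) * T f) (f : R[X]) :
    T f = T 1 * f.comp (X + C s) := by
  induction f using Polynomial.induction_on with
  | C a =>
    rw [← mul_one (C a), C_mul', T.map_smul, Polynomial.smul_comp, one_comp, mul_smul_comm,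
      mul_one]
  | add f g hf hg => rw [T.map_add, hf, hg, Polynomial.add_comp, mul_add]
  | monomial n a ih =>
    rw [pow_succ', mul_left_comm, hT, ih]
    simp only [Polynomial.mul_comp, X_comp]
    ring

namespace WittRep

variable {M N : Type*} [AddCommGroup M] [Module ℂ M] [AddCommGroup N] [Module ℂ N]

def conj (ρ : WittRep M) (e : M ≃ₗ[ℂ] N) : WittRep N where
  L m := e.conj (ρ.L m)
  comm m n v := by simp [← map_sub, ρ.comm]

@[simp]
theorem conj_L_apply (ρ : WittRep M) (e : M ≃ₗ[ℂ] N) (m : ℤ) (v : N) :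
    (ρ.conj e).L m v = e (ρ.L m (e.symm v)) :=
  rfl

variable (ρ : WittRep ℂ[X]) (h0 : ∀ f, ρ.L 0 f = X * f)
include h0

theorem L_apply_X_mul (m : ℤ) (f : ℂ[X]) : ρ.L m (X * f) = (X + C (m : ℂ)) * ρ.L m f := by
  have h := ρ.comm m 0 f
  rw [h0, h0, sub_zero, add_zero, smul_eq_C_mul] at h
  linear_combination h

theorem L_apply_eq_mul_comp (m : ℤ) (f : ℂ[X]) :
    ρ.L m f = ρ.L m 1 * f.comp (X + C (m : ℂ)) :=
  (ρ.L m).apply_eq_mul_comp_of_apply_X_mul _ (ρ.L_apply_X_mul h0 m) f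

theorem isWittFamily : IsWittFamily fun m => ρ.L m 1 := by
  intro m n
  have h := ρ.comm m n 1
  rw [ρ.L_apply_eq_mul_comp h0 m (ρ.L n 1), ρ.L_apply_eq_mul_comp h0 n (ρ.L m 1),
    Int.cast_sub] at h
  exact h

theorem exists_eq_l0 : ∃ l, l ≠ 0 ∧ ∃ a, ∀ m f, ρ.L m f = l0 l a m f := by
  obtain ⟨l, hl, a, hg⟩ := (ρ.isWittFamily h0).exists_eq_l0 (by rw [h0, mul_one])
  refine ⟨l, hl, a, fun m f => ?_⟩
  rw [ρ.L_apply_eq_mul_comp h0, hg, l0, l0, one_comp, mul_one, smul_mul_assoc]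

end WittRep

/-- any Witt-algebra module which is free of rank 1 as a module over
`U(ℂL_0) = ℂ[L_0]` is isomorphic to some `Ω(λ, α)` with `λ ∈ ℂ*`, `α ∈ ℂ`. -/
theorem witt_free_rank_one_classification (M : Type*) [AddCommGroup M] [Module ℂ M]
    (ρ : WittRep M)
    (hfree : ∃ v : M, Function.Bijective fun f : Polynomial ℂ => Polynomial.aeval (ρ.L 0) f v) :
    ∃ (l : ℂ), l ≠ 0 ∧ ∃ (a : ℂ) (e : M ≃ₗ[ℂ] Polynomial ℂ),
      ∀ (m : ℤ) (v : M), e (ρ.L m v) = l0 l a m (e v) := by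
  obtain ⟨v, hv⟩ := hfree
  let E : ℂ[X] ≃ₗ[ℂ] M :=
    .ofBijective (LinearMap.applyₗ v ∘ₗ (aeval (ρ.L 0)).toLinearMap) hv
  have h0 : ∀ f, (ρ.conj E.symm).L 0 f = X * f := by
    intro f
    rw [WittRep.conj_L_apply, LinearEquiv.symm_symm, LinearEquiv.symm_apply_eq]
    show ρ.L 0 (aeval (ρ.L 0) f v) = aeval (ρ.L 0) (X * f) v
    rw [map_mul, aeval_X, Module.End.mul_apply]
  obtain ⟨l, hl, a, hL⟩ := (ρ.conj E.symm).exists_eq_l0 h0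
  refine ⟨l, hl, a, E.symm, fun m w => ?_⟩
  rw [← hL, WittRep.conj_L_apply, LinearEquiv.symm_symm, LinearEquiv.apply_symm_apply]
end

section
/- Let λ ∈ ℂ*, α ∈ ℂ. On the ℤ₂-graded space V = ℂ[x²] ⊕ xℂ[x²] (even part ℂ[x²], odd part xℂ[x²]), the actions L_m f(x²) = λ^m (x² + mα) f(x²+m), L_m x f(x²) = λ^m x (x² + mα + m/2) f(x²+m), G_m f(x²) = λ^m x f(x²+m), G_m x f(x²) = λ^m (x² + 2mα) f(x²+m) (m ∈ ℤ) define a module structure over the Ramond algebra (satisfying all super-bracket relations). -/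
open Polynomial

/-- `L_m` on the odd part `xℂ[x²]` (coordinate `t = x²`): `f ↦ λ^m (t + mα + m/2) f(t+m)`. -/
noncomputable def l1 (l a : ℂ) (m : ℤ) (f : Polynomial ℂ) : Polynomial ℂ :=
  l ^ m • ((X + C ((m : ℂ) * a + (m : ℂ) / 2)) * f.comp (X + C (m : ℂ)))

/-- `G_m` from the even part to the odd part: `f(x²) ↦ λ^m x f(x²+m)`. -/
noncomputable def g01 (l : ℂ) (m : ℤ) (f : Polynomial ℂ) : Polynomial ℂ :=
  l ^ m • f.comp (X + C (m : ℂ))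

/-- `G_m` from the odd part to the even part: `x f(x²) ↦ λ^m (x² + 2mα) f(x²+m)`. -/
noncomputable def g10 (l a : ℂ) (m : ℤ) (f : Polynomial ℂ) : Polynomial ℂ :=
  l ^ m • ((X + C (2 * (m : ℂ) * a)) * f.comp (X + C (m : ℂ)))

/-- `L_m` on `Ω_R(λ,α) = ℂ[x²] ⊕ xℂ[x²]`, a pair `(f, g)` representing `f(x²) + x g(x²)`. -/
noncomputable def RL (l a : ℂ) (m : ℤ) (v : Polynomial ℂ × Polynomial ℂ) :
    Polynomial ℂ × Polynomial ℂ :=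
  (l0 l a m v.1, l1 l a m v.2)

/-- `G_m` on `Ω_R(λ,α)`. -/
noncomputable def RG (l a : ℂ) (m : ℤ) (v : Polynomial ℂ × Polynomial ℂ) :
    Polynomial ℂ × Polynomial ℂ :=
  (g10 l a m v.2, g01 l m v.1)

/-- the formulas above define a module structure over the Ramond algebra
(`[L_m,L_n]=(m−n)L_{m+n}`, `[L_m,G_n]=(m/2−n)G_{m+n}`, `[G_m,G_n]=2L_{m+n}`, the last
bracket being an anticommutator since the `G`'s are odd). -/
theorem ramond_module_relations (l a : ℂ) (hl : l ≠ 0) (m n : ℤ)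
    (v : Polynomial ℂ × Polynomial ℂ) :
    RL l a m (RL l a n v) - RL l a n (RL l a m v) = ((m - n : ℤ) : ℂ) • RL l a (m + n) v
    ∧ RL l a m (RG l a n v) - RG l a n (RL l a m v)
        = ((m : ℂ) / 2 - (n : ℂ)) • RG l a (m + n) v
    ∧ RG l a m (RG l a n v) + RG l a n (RG l a m v) = (2 : ℂ) • RL l a (m + n) v := by

  have pf : ∀ p q : Polynomial ℂ, (∀ z : ℂ, p.eval z = q.eval z) → p = q := fun p q h =>
    Polynomial.funext h
  refine ⟨?_, ?_, ?_⟩ <;>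
  · simp only [RL, RG, l0, l1, g01, g10, Prod.ext_iff, Prod.smul_fst, Prod.smul_snd,
      Prod.fst_sub, Prod.snd_sub, Prod.fst_add, Prod.snd_add, Prod.mk.injEq]
    constructor <;>
    · apply pf
      intro z
      simp only [eval_smul, eval_mul, eval_add, eval_sub, eval_comp, eval_X, eval_C,
        smul_eq_mul, zpow_add₀ hl]
      push_cast
      ring_nf
end

section
/- For λ ∈ ℂ* and α ∈ ℂ, the Ramond-algebra module Ω_R(λ, α) is simple if and only if α ≠ 0. -/
open Polynomial

/-- A (graded) submodule of `Ω_R(λ,α)`: a pair of subspaces `(W0, W1)` of the even and odd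
parts, invariant under all `L_m` and `G_m`. -/
def RSub (l a : ℂ) (W0 W1 : Submodule ℂ (Polynomial ℂ)) : Prop :=
  ∀ m : ℤ, (∀ f ∈ W0, l0 l a m f ∈ W0 ∧ g01 l m f ∈ W1)
    ∧ (∀ g ∈ W1, l1 l a m g ∈ W1 ∧ g10 l a m g ∈ W0)

/-- Composition of two integer shifts is a shift. -/
lemma comp_comp_shift (f : Polynomial ℂ) (c d : ℂ) :
    (f.comp (X + C c)).comp (X + C d) = f.comp (X + C (c + d)) := by
  rw [comp_assoc]
  simp only [add_comp, X_comp, C_comp, C_add]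
  ring_nf

/-- A polynomial invariant under the shift by one is constant. -/
lemma natDegree_eq_zero_of_comp_eq (f : Polynomial ℂ) (h : f.comp (X + C 1) = f) :
    f.natDegree = 0 := by
  have key : ∀ n : ℕ, f.eval (n : ℂ) = f.eval 0 := by
    intro n
    induction n with
    | zero => simp
    | succ n ih =>
      have := congrArg (Polynomial.eval (n : ℂ)) h
      rw [eval_comp] at this
      simp at this
      rw [← ih, ← this]
      push_cast; ring_nf
  have : f = C (f.eval 0) := by
    apply Polynomial.eq_of_infinite_eval_eq
    apply Set.infinite_of_injective_forall_mem (f := (Nat.cast : ℕ → ℂ)) Nat.cast_injective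
    intro n; simp [key n]
  rw [this]; simp

/-- The finite difference of a nonzero polynomial has strictly smaller degree. -/
lemma degree_diff_lt (f : Polynomial ℂ) (hne : f ≠ 0) :
    (f.comp (X + C 1) - f).degree < f.degree := by
  have hcne : f.comp (X + C 1) ≠ 0 := comp_X_add_C_ne_zero_iff.mpr hne
  have hdeg : (f.comp (X + C 1)).degree = f.degree := by
    rw [degree_eq_natDegree hcne, degree_eq_natDegree hne, natDegree_comp,
      natDegree_X_add_C, mul_one]
  have hlc : (f.comp (X + C 1)).leadingCoeff = f.leadingCoeff := by
    rw [leadingCoeff_comp (by rw [natDegree_X_add_C]; norm_num), leadingCoeff_X_add_C,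
      one_pow, mul_one]
  have := degree_sub_lt hdeg hcne hlc
  rwa [hdeg] at this

/-- A shift-invariant subspace containing a nonzero element contains `1`. -/
lemma one_mem_of_shift_invariant (W0 : Submodule ℂ (Polynomial ℂ))
    (hshift : ∀ f ∈ W0, f.comp (X + C 1) ∈ W0) :
    ∀ d : ℕ, ∀ f ∈ W0, f ≠ 0 → f.natDegree ≤ d → (1 : Polynomial ℂ) ∈ W0 := by
  intro d
  induction d with
  | zero =>
    intro f hf hne hdeg
    have hfC : f = C (f.coeff 0) := eq_C_of_natDegree_eq_zero (Nat.le_zero.mp hdeg)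
    have hc : f.coeff 0 ≠ 0 := fun h => hne (by rw [hfC, h, map_zero])
    have := W0.smul_mem (f.coeff 0)⁻¹ hf
    rwa [show (f.coeff 0)⁻¹ • f = 1 by
      nth_rewrite 2 [hfC]
      rw [smul_C, smul_eq_mul, inv_mul_cancel₀ hc, map_one]] at this
  | succ d ih =>
    intro f hf hne hdeg
    by_cases h0 : f.natDegree = 0
    · have hfC : f = C (f.coeff 0) := eq_C_of_natDegree_eq_zero h0
      have hc : f.coeff 0 ≠ 0 := fun h => hne (by rw [hfC, h, map_zero])
      have := W0.smul_mem (f.coeff 0)⁻¹ hf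
      rwa [show (f.coeff 0)⁻¹ • f = 1 by
        nth_rewrite 2 [hfC]
        rw [smul_C, smul_eq_mul, inv_mul_cancel₀ hc, map_one]] at this
    · set g := f.comp (X + C 1) - f with hg_def
      have hg : g ∈ W0 := W0.sub_mem (hshift f hf) hf
      have hgne : g ≠ 0 := by
        intro h
        exact h0 (natDegree_eq_zero_of_comp_eq f (sub_eq_zero.mp h))
      have hlt : g.natDegree < f.natDegree :=
        natDegree_lt_natDegree hgne (degree_diff_lt f hne)
      exact ih g hg hgne (by omega)

/-- for `λ ∈ ℂ*`, `α ∈ ℂ`, the Ramond module `Ω_R(λ,α)` is simple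
iff `α ≠ 0`. -/
theorem ramond_simple_iff (l a : ℂ) (hl : l ≠ 0) :
    (∀ W0 W1 : Submodule ℂ (Polynomial ℂ), RSub l a W0 W1 →
      (W0 = ⊥ ∧ W1 = ⊥) ∨ (W0 = ⊤ ∧ W1 = ⊤)) ↔ a ≠ 0 := by
  constructor
  · -- simple → a ≠ 0
    intro hsimple ha0
    subst ha0
    set W0 : Submodule ℂ (Polynomial ℂ) := LinearMap.ker (lcoeff ℂ 0) with hW0
    have hmem : ∀ f : Polynomial ℂ, f ∈ W0 ↔ f.coeff 0 = 0 := by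
      intro f; simp [hW0, LinearMap.mem_ker]
    have hsub : RSub l 0 W0 ⊤ := by
      intro m
      constructor
      · intro f hf
        refine ⟨?_, trivial⟩
        rw [hmem]
        simp [l0, coeff_smul, mul_coeff_zero, coeff_X_zero]
      · intro g _
        refine ⟨trivial, ?_⟩
        rw [hmem]
        simp [g10, coeff_smul, mul_coeff_zero, coeff_X_zero]
    rcases hsimple W0 ⊤ hsub with ⟨_, htop⟩ | ⟨hW, _⟩
    · exact absurd htop.symm bot_ne_top
    · have : (1 : Polynomial ℂ) ∈ W0 := hW ▸ trivial
      rw [hmem] at this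
      simp at this
  · -- a ≠ 0 → simple
    intro ha W0 W1 hsub
    -- basic closure facts
    have hz : ∀ m : ℤ, (l ^ m : ℂ) ≠ 0 := fun m => zpow_ne_zero m hl
    have A1 : ∀ f ∈ W0, ∀ m : ℤ, f.comp (X + C (m : ℂ)) ∈ W1 := by
      intro f hf m
      have := ((hsub m).1 f hf).2
      rwa [g01, Submodule.smul_mem_iff _ (hz m)] at this
    have A2 : ∀ g ∈ W1, ∀ n : ℤ,
        (X + C (2 * (n : ℂ) * a)) * g.comp (X + C (n : ℂ)) ∈ W0 := by
      intro g hg n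
      have := ((hsub n).2 g hg).2
      rwa [g10, Submodule.smul_mem_iff _ (hz n)] at this
    have A3 : ∀ f ∈ W0, ∀ n j : ℤ,
        (X + C (2 * (n : ℂ) * a)) * f.comp (X + C (j : ℂ)) ∈ W0 := by
      intro f hf n j
      have h1 : f.comp (X + C ((j - n : ℤ) : ℂ)) ∈ W1 := A1 f hf (j - n)
      have h2 := A2 _ h1 n
      rwa [comp_comp_shift, show ((j - n : ℤ) : ℂ) + (n : ℂ) = (j : ℂ) by push_cast; ring]
        at h2
    have A4 : ∀ f ∈ W0, ∀ j : ℤ, f.comp (X + C (j : ℂ)) ∈ W0 := by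
      intro f hf j
      have h1 := A3 f hf 1 j
      have h0 := A3 f hf 0 j
      simp only [Int.cast_one, Int.cast_zero, mul_zero, zero_mul, map_zero, add_zero] at h1 h0
      have := W0.sub_mem h1 h0
      rw [show (X + C (2 * 1 * a)) * f.comp (X + C (j : ℂ)) - X * f.comp (X + C (j : ℂ))
          = (2 * a) • f.comp (X + C (j : ℂ)) by rw [smul_eq_C_mul]; ring] at this
      rwa [Submodule.smul_mem_iff _ (by simpa using ha)] at this
    have Amul : ∀ f ∈ W0, X * f ∈ W0 := by
      intro f hf
      have := A3 f hf 0 0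
      simpa using this
    -- main case analysis
    by_cases hbot : W0 = ⊥
    · left
      refine ⟨hbot, ?_⟩
      rw [Submodule.eq_bot_iff]
      intro g hg
      by_contra hgne
      have h2 := A2 g hg 0
      simp only [Int.cast_zero, mul_zero, zero_mul, map_zero, C_0, add_zero, comp_X] at h2
      rw [hbot, Submodule.mem_bot] at h2
      exact (mul_ne_zero X_ne_zero hgne) h2
    · right
      -- W0 contains a nonzero element, hence 1
      obtain ⟨f, hf, hfne⟩ := Submodule.exists_mem_ne_zero_of_ne_bot hbot
      have hshift : ∀ f ∈ W0, f.comp (X + C 1) ∈ W0 := by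
        intro f hf
        have := A4 f hf 1
        simpa using this
      have hone : (1 : Polynomial ℂ) ∈ W0 :=
        one_mem_of_shift_invariant W0 hshift f.natDegree f hf hfne le_rfl
      -- all monomials
      have hXpow : ∀ k : ℕ, (X : Polynomial ℂ) ^ k ∈ W0 := by
        intro k
        induction k with
        | zero => simpa using hone
        | succ k ih => rw [pow_succ, mul_comm]; exact Amul _ ih
      have hW0top : W0 = ⊤ := by
        rw [Submodule.eq_top_iff']
        intro p
        induction p using Polynomial.induction_on' with
        | add p q hp hq => exact W0.add_mem hp hq
        | monomial n c =>
          rw [← smul_X_eq_monomial]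
          exact W0.smul_mem c (hXpow n)
      refine ⟨hW0top, ?_⟩
      rw [Submodule.eq_top_iff']
      intro g
      have hg0 : g ∈ W0 := hW0top ▸ trivial
      have := A1 g hg0 0
      simpa using this
end

section
/- For λ ∈ ℂ*, the Ramond module Ω_R(λ, 0) has a unique proper nonzero graded submodule, namely Ξ = x²ℂ[x²] ⊕ xℂ[x²], and the quotient Ω_R(λ, 0)/Ξ is a 1-dimensional trivial R-module. -/
open Polynomial

lemma mem_XPoly_iff (p : Polynomial ℂ) : p ∈ XPoly ↔ p.eval 0 = 0 := Iff.rfl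

lemma shift_fix_natDegree (g : Polynomial ℂ) (h : g.comp (X + C 1) = g) :
    g.natDegree = 0 := by
  have key : ∀ n : ℕ, g.eval (n : ℂ) = g.eval 0 := by
    intro n
    induction n with
    | zero => simp
    | succ n ih =>
      have h2 := congrArg (fun p => p.eval (n : ℂ)) h
      simp only [eval_comp, eval_add, eval_X, eval_C] at h2
      push_cast
      rw [← ih, ← h2]
  have h0 : g - C (g.eval 0) = 0 := by
    apply Polynomial.eq_zero_of_infinite_isRoot
    apply Set.infinite_of_injective_forall_mem (f := (Nat.cast : ℕ → ℂ)) Nat.cast_injective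
    intro n
    simp [Polynomial.IsRoot, key n]
  have : g = C (g.eval 0) := by rwa [sub_eq_zero] at h0
  rw [this]; exact natDegree_C _

lemma one_mem_of_shift (W : Submodule ℂ (Polynomial ℂ))
    (hS : ∀ g ∈ W, g.comp (X + C 1) ∈ W) :
    ∀ n : ℕ, ∀ g ∈ W, g ≠ 0 → g.natDegree ≤ n → (1 : Polynomial ℂ) ∈ W := by
  intro n
  induction n with
  | zero =>
    intro g hg hg0 hn
    have hdeg : g.natDegree = 0 := Nat.le_zero.1 hn
    have hgC : g = C (g.coeff 0) := Polynomial.eq_C_of_natDegree_eq_zero hdeg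
    have hc : g.coeff 0 ≠ 0 := by
      intro hc; apply hg0; rw [hgC, hc, map_zero]
    have h1 : (1 : Polynomial ℂ) = (g.coeff 0)⁻¹ • g := by
      nth_rewrite 2 [hgC]
      rw [smul_C, smul_eq_mul, inv_mul_cancel₀ hc, map_one]
    rw [h1]; exact W.smul_mem _ hg
  | succ n ih =>
    intro g hg hg0 hn
    rcases le_or_gt g.natDegree n with h | h
    · exact ih g hg hg0 h
    have hd : g.natDegree = n + 1 := le_antisymm hn h
    set D := g.comp (X + C 1) - g with hD
    have hDmem : D ∈ W := W.sub_mem (hS g hg) hg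
    by_cases hD0 : D = 0
    · have := shift_fix_natDegree g (by rwa [hD, sub_eq_zero] at hD0)
      omega
    · have hcompdeg : (g.comp (X + C 1)).natDegree = g.natDegree := by
        rw [natDegree_comp, natDegree_X_add_C, mul_one]
      have hlc : (g.comp (X + C 1)).leadingCoeff = g.leadingCoeff := by
        rw [Polynomial.leadingCoeff_comp (by rw [natDegree_X_add_C]; exact one_ne_zero)]
        rw [(Polynomial.monic_X_add_C (1 : ℂ)), one_pow, mul_one]
      have hcomp0 : g.comp (X + C 1) ≠ 0 := by
        intro h0
        apply hg0
        rw [← Polynomial.leadingCoeff_eq_zero, ← hlc, h0, leadingCoeff_zero]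
      have hdegeq : (g.comp (X + C 1)).degree = g.degree := by
        rw [Polynomial.degree_eq_natDegree hcomp0, Polynomial.degree_eq_natDegree hg0, hcompdeg]
      have hlt : D.degree < (g.comp (X + C 1)).degree :=
        Polynomial.degree_sub_lt hdegeq hcomp0 hlc
      have hlt' : D.natDegree < g.natDegree := by
        have := Polynomial.natDegree_lt_natDegree hD0 hlt
        rwa [hcompdeg] at this
      exact ih D hDmem hD0 (by omega)

lemma top_of_one_mem (W : Submodule ℂ (Polynomial ℂ))
    (hX : ∀ g ∈ W, X * g ∈ W) (h1 : (1 : Polynomial ℂ) ∈ W) : W = ⊤ := by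
  rw [Submodule.eq_top_iff']
  intro p
  induction p using Polynomial.induction_on with
  | C a => simpa [Polynomial.smul_eq_C_mul] using W.smul_mem a h1
  | add p q hp hq => exact W.add_mem hp hq
  | monomial n a hp =>
    have h2 := hX _ hp
    have e : C a * X ^ (n + 1) = X * (C a * X ^ n) := by ring
    rwa [e]

section closure

variable {l : ℂ} {W0 W1 : Submodule ℂ (Polynomial ℂ)}

lemma RSub.xmul_mem_W0 (h : RSub l 0 W0 W1) {g : Polynomial ℂ} (hg : g ∈ W1) :
    X * g ∈ W0 := by
  have h2 := ((h 0).2 g hg).2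
  simpa [g10] using h2

lemma RSub.mem_W1 (h : RSub l 0 W0 W1) {f : Polynomial ℂ} (hf : f ∈ W0) :
    f ∈ W1 := by
  have h2 := ((h 0).1 f hf).2
  simpa [g01] using h2

lemma RSub.xmul_mem_W1 (h : RSub l 0 W0 W1) {g : Polynomial ℂ} (hg : g ∈ W1) :
    X * g ∈ W1 := h.mem_W1 (h.xmul_mem_W0 hg)

lemma RSub.shift_mem_W1 (h : RSub l 0 W0 W1) (hl : l ≠ 0) {g : Polynomial ℂ} (hg : g ∈ W1) :
    g.comp (X + C 1) ∈ W1 := by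
  have hb0 : X * g ∈ W0 := h.xmul_mem_W0 hg
  have h2 : g01 l 1 (X * g) ∈ W1 := ((h 1).1 _ hb0).2
  have hb1 : g10 l 0 1 g ∈ W0 := ((h 1).2 g hg).2
  have h3 : g01 l 0 (g10 l 0 1 g) ∈ W1 := ((h 0).1 _ hb1).2
  have e2 : g01 l 1 (X * g) = l • ((X + C 1) * g.comp (X + C 1)) := by
    simp [g01, mul_comp, X_comp]
  have e3 : g01 l 0 (g10 l 0 1 g) = l • (X * g.comp (X + C 1)) := by
    simp [g01, g10, mul_comp, X_comp]
  rw [e2] at h2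
  rw [e3] at h3
  have hsub := W1.sub_mem h2 h3
  have e4 : l • ((X + C 1) * g.comp (X + C 1)) - l • (X * g.comp (X + C 1))
      = l • g.comp (X + C 1) := by
    rw [← smul_sub, C_1]; congr 1; ring
  rw [e4] at hsub
  exact (Submodule.smul_mem_iff W1 hl).1 hsub

end closure

lemma l0_mem_XPoly (l : ℂ) (m : ℤ) (f : Polynomial ℂ) : l0 l 0 m f ∈ XPoly := by
  rw [mem_XPoly_iff]
  simp [l0]

lemma g10_mem_XPoly (l : ℂ) (m : ℤ) (f : Polynomial ℂ) : g10 l 0 m f ∈ XPoly := by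
  rw [mem_XPoly_iff]
  simp [g10]

/-- for `λ ∈ ℂ*`, `Ξ = x²ℂ[x²] ⊕ xℂ[x²]` is the unique proper nonzero graded
submodule of `Ω_R(λ,0)`, and the quotient `Ω_R(λ,0)/Ξ` is a 1-dimensional trivial module
(it has dimension 1 and the action of every `L_m`, `G_m` lands in `Ξ`). -/
theorem ramond_alpha_zero_structure (l : ℂ) (hl : l ≠ 0) :
    RSub l 0 XPoly ⊤
    ∧ (∀ W0 W1 : Submodule ℂ (Polynomial ℂ), RSub l 0 W0 W1 →
        ¬(W0 = ⊥ ∧ W1 = ⊥) → ¬(W0 = ⊤ ∧ W1 = ⊤) → W0 = XPoly ∧ W1 = ⊤)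
    ∧ Module.finrank ℂ (Polynomial ℂ ⧸ XPoly) = 1
    ∧ (∀ (m : ℤ) (f : Polynomial ℂ), l0 l 0 m f ∈ XPoly ∧ g10 l 0 m f ∈ XPoly) := by
  refine ⟨?_, ?_, ?_, fun m f => ⟨l0_mem_XPoly l m f, g10_mem_XPoly l m f⟩⟩
  · intro m
    exact ⟨fun f _ => ⟨l0_mem_XPoly l m f, Submodule.mem_top⟩,
      fun g _ => ⟨Submodule.mem_top, g10_mem_XPoly l m g⟩⟩
  · intro W0 W1 h hbot htop
    have hW1ne : ∃ g ∈ W1, g ≠ 0 := by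
      by_cases hb0 : W0 = ⊥
      · have hb1 : W1 ≠ ⊥ := fun hb1 => hbot ⟨hb0, hb1⟩
        exact (Submodule.ne_bot_iff W1).1 hb1
      · obtain ⟨f, hf, hf0⟩ := (Submodule.ne_bot_iff W0).1 hb0
        exact ⟨f, h.mem_W1 hf, hf0⟩
    obtain ⟨g, hg, hg0⟩ := hW1ne
    have h1 : (1 : Polynomial ℂ) ∈ W1 :=
      one_mem_of_shift W1 (fun q hq => h.shift_mem_W1 hl hq) g.natDegree g hg hg0 le_rfl
    have hW1top : W1 = ⊤ := top_of_one_mem W1 (fun q hq => h.xmul_mem_W1 hq) h1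
    have hXsub : XPoly ≤ W0 := by
      intro p hp
      have hx : X ∣ p := Polynomial.X_dvd_iff.2
        (by rw [Polynomial.coeff_zero_eq_eval_zero]; exact hp)
      obtain ⟨q, hq⟩ := hx
      rw [hq]
      exact h.xmul_mem_W0 (by rw [hW1top]; trivial)
    have hW0sub : W0 ≤ XPoly := by
      by_contra hc
      rw [SetLike.not_le_iff_exists] at hc
      obtain ⟨p, hp, hp0⟩ := hc
      have hpe : p.eval 0 ≠ 0 := fun he => hp0 he
      have hsub2 : p - C (p.eval 0) ∈ W0 := hXsub (by simp [mem_XPoly_iff])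
      have hC : C (p.eval 0) ∈ W0 := by
        have := W0.sub_mem hp hsub2; simpa using this
      have h1' : (1 : Polynomial ℂ) ∈ W0 := by
        have := W0.smul_mem (p.eval 0)⁻¹ hC
        rwa [smul_C, smul_eq_mul, inv_mul_cancel₀ hpe, map_one] at this
      have hW0top : W0 = ⊤ := by
        rw [Submodule.eq_top_iff']
        intro q
        have e : q = C (q.eval 0) + (q - C (q.eval 0)) := by ring
        rw [e]
        exact W0.add_mem
          (by simpa [Polynomial.smul_eq_C_mul] using W0.smul_mem (q.eval 0) h1')
          (hXsub (by simp [mem_XPoly_iff]))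
      exact htop ⟨hW0top, hW1top⟩
    exact ⟨le_antisymm hW0sub hXsub, hW1top⟩
  · have hker : XPoly = LinearMap.ker (Polynomial.leval (0 : ℂ)) := by
      ext p
      simp [mem_XPoly_iff, Polynomial.leval_apply]
    have hs : Function.Surjective (Polynomial.leval (0 : ℂ)) := fun c =>
      ⟨C c, by simp [Polynomial.leval_apply]⟩
    rw [hker, (LinearMap.quotKerEquivOfSurjective _ hs).finrank_eq, Module.finrank_self]
end

section
/- For λ ∈ ℂ*, the submodule Ξ = x²ℂ[x²] ⊕ xℂ[x²] of the Ramond module Ω_R(λ, 0) is isomorphic, as an R-module, to the parity change Π(Ω_R(λ, 1/2)); an explicit isomorphism φ sends x²f(x²) ↦ xf(x²) and xf(x²) ↦ f(x²). In particular Ξ is a simple R-module. -/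
open Polynomial

/-- A submodule of `ℂ[X]` closed under multiplication by `X` is closed under
multiplication by arbitrary polynomials. -/
theorem aux_hmul (W1 : Submodule ℂ (Polynomial ℂ)) (hX : ∀ g ∈ W1, X * g ∈ W1) :
    ∀ (p g : Polynomial ℂ), g ∈ W1 → p * g ∈ W1 := by
  intro p g hg
  induction p using Polynomial.induction_on with
  | C a => simpa [smul_eq_C_mul] using W1.smul_mem a hg
  | add p q hp hq => simpa [add_mul] using W1.add_mem hp hq
  | monomial n a ih =>
      have : C a * X ^ (n + 1) * g = X * (C a * X ^ n * g) := by ring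
      rw [this]; exact hX _ ih

/-- A submodule of `ℂ[X]` closed under all integer shifts and containing a nonzero
polynomial contains `1`. -/
theorem aux_one_mem (W1 : Submodule ℂ (Polynomial ℂ))
    (hshift : ∀ g ∈ W1, ∀ m : ℤ, g.comp (X + C (m : ℂ)) ∈ W1) :
    ∀ n : ℕ, ∀ g ∈ W1, g ≠ 0 → g.natDegree ≤ n → (1 : Polynomial ℂ) ∈ W1 := by
  have const : ∀ c : ℂ, c ≠ 0 → C c ∈ W1 → (1 : Polynomial ℂ) ∈ W1 := by
    intro c hc hmem
    have := W1.smul_mem c⁻¹ hmem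
    rwa [smul_C, smul_eq_mul, inv_mul_cancel₀ hc, C_1] at this
  intro n
  induction n with
  | zero =>
      intro g hg hg0 hdeg
      have hgC : g = C (g.coeff 0) := eq_C_of_natDegree_le_zero hdeg
      refine const (g.coeff 0) (fun h => hg0 (by rw [hgC, h, C_0])) (hgC ▸ hg)
  | succ n ih =>
      intro g hg hg0 hdeg
      have hs : g.comp (X + C (1 : ℂ)) ∈ W1 := by
        simpa using hshift g hg 1
      set q : Polynomial ℂ := g.comp (X + C (1 : ℂ)) - g with hq
      have hqmem : q ∈ W1 := W1.sub_mem hs hg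
      by_cases hq0 : q = 0
      · -- g(X+1) = g, so g is constant
        have hcomp : g.comp (X + C (1 : ℂ)) = g := sub_eq_zero.mp hq0
        have heval : ∀ x : ℂ, g.eval (x + 1) = g.eval x := by
          intro x
          have := congrArg (fun p => Polynomial.eval x p) hcomp
          simpa [eval_comp] using this
        have hnat : ∀ k : ℕ, g.eval (k : ℂ) = g.eval 0 := by
          intro k
          induction k with
          | zero => simp
          | succ k ihk => push_cast; rw [heval (k : ℂ)]; exact ihk
        have hconst : g - C (g.eval 0) = 0 := by
          apply Polynomial.eq_zero_of_infinite_isRoot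
          have hinf : (Set.range (Nat.cast : ℕ → ℂ)).Infinite :=
            Set.infinite_range_of_injective Nat.cast_injective
          refine hinf.mono ?_
          rintro x ⟨k, rfl⟩
          simp [IsRoot, hnat k]
        have hgC : g = C (g.eval 0) := by linear_combination (norm := ring_nf) hconst
        refine const (g.eval 0) (fun h => hg0 (by rw [hgC, h, C_0])) (hgC ▸ hg)
      · -- natDegree q < natDegree g
        have hgdeg : g.natDegree ≠ 0 := by
          intro h0
          apply hq0
          have : g = C (g.coeff 0) := eq_C_of_natDegree_le_zero h0.le
          rw [hq, this]; simp
        have hXC : (X + C (1 : ℂ)).natDegree ≠ 0 := by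
          rw [natDegree_X_add_C]; exact one_ne_zero
        have hlc : (g.comp (X + C (1 : ℂ))).leadingCoeff = g.leadingCoeff := by
          rw [leadingCoeff_comp hXC, leadingCoeff_X_add_C, one_pow, mul_one]
        have hcompne : g.comp (X + C (1 : ℂ)) ≠ 0 := by
          intro h
          apply hg0
          rw [← leadingCoeff_eq_zero, ← hlc, h, leadingCoeff_zero]
        have hnd : (g.comp (X + C (1 : ℂ))).natDegree = g.natDegree := by
          rw [natDegree_comp, natDegree_X_add_C, mul_one]
        have hdlt : q.degree < g.degree := by
          have := degree_sub_lt (p := g.comp (X + C (1:ℂ))) (q := g)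
            (by rw [degree_eq_natDegree hcompne, degree_eq_natDegree hg0, hnd]) hcompne hlc
          calc q.degree < (g.comp (X + C (1:ℂ))).degree := this
            _ = g.degree := by rw [degree_eq_natDegree hcompne, degree_eq_natDegree hg0, hnd]
        have hqlt : q.natDegree < g.natDegree := natDegree_lt_natDegree hq0 hdlt
        exact ih q hqmem hq0 (by omega)

/-- the map `φ : x²f(x²) ↦ xf(x²), xf(x²) ↦ f(x²)` is an isomorphism of
`R`-modules from `Ξ = x²ℂ[x²] ⊕ xℂ[x²] ⊆ Ω_R(λ,0)` onto the parity change
`Π(Ω_R(λ,1/2))` (whose even part is the odd part of `Ω_R(λ,1/2)` and vice versa);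
in particular `Ξ` is a simple `R`-module.  The four identities below express exactly that
`φ` intertwines the actions of all `L_m` and `G_m`. -/
theorem xi_iso_parity_change (l : ℂ) (hl : l ≠ 0) :
    (∀ (m : ℤ) (h g : Polynomial ℂ),
      l0 l 0 m (X * h) = X * l1 l (1/2) m h
      ∧ l1 l 0 m g = l0 l (1/2) m g
      ∧ g01 l m (X * h) = g10 l (1/2) m h
      ∧ g10 l 0 m g = X * g01 l m g)
    ∧ (∀ W0 W1 : Submodule ℂ (Polynomial ℂ), W0 ≤ XPoly →
        (∀ m : ℤ, (∀ f ∈ W0, l0 l 0 m f ∈ W0 ∧ g01 l m f ∈ W1)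
          ∧ (∀ g ∈ W1, l1 l 0 m g ∈ W1 ∧ g10 l 0 m g ∈ W0)) →
        (W0 = ⊥ ∧ W1 = ⊥) ∨ (W0 = XPoly ∧ W1 = ⊤)) := by
  constructor
  · intro m h g
    refine ⟨?_, ?_, ?_, ?_⟩ <;>
      simp only [l0, l1, g01, g10, smul_eq_C_mul, mul_comp, X_comp, C_comp, add_comp,
        mul_zero, zero_add, add_zero, C_0, mul_one_div, mul_one] <;> ring
  · intro W0 W1 hW0le H
    have h01 : ∀ f ∈ W0, f ∈ W1 := by
      intro f hf
      have := ((H 0).1 f hf).2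
      simpa [g01] using this
    have hX : ∀ g ∈ W1, X * g ∈ W1 := by
      intro g hg
      have := ((H 0).2 g hg).1
      simpa [l1] using this
    have hshift : ∀ g ∈ W1, ∀ m : ℤ, g.comp (X + C (m : ℂ)) ∈ W1 := by
      intro g hg m
      rcases eq_or_ne m 0 with rfl | hm
      · simpa using hg
      · have e1 : l1 l 0 m g ∈ W1 := ((H m).2 g hg).1
        have e2 : g10 l 0 m g ∈ W1 := h01 _ ((H m).2 g hg).2
        have hsub := W1.sub_mem e1 e2
        have hrw : l1 l 0 m g - g10 l 0 m g
            = (l ^ m * ((m : ℂ) / 2)) • g.comp (X + C (m : ℂ)) := by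
          simp only [l1, g10, smul_eq_C_mul, mul_zero, zero_add, add_zero, C_0, map_mul, mul_one_div]
          ring
        rw [hrw] at hsub
        have hc : l ^ m * ((m : ℂ) / 2) ≠ 0 :=
          mul_ne_zero (zpow_ne_zero _ hl)
            (div_ne_zero (Int.cast_ne_zero.mpr hm) two_ne_zero)
        have := W1.smul_mem (l ^ m * ((m : ℂ) / 2))⁻¹ hsub
        rwa [smul_smul, inv_mul_cancel₀ hc, one_smul] at this
    by_cases hW1bot : W1 = ⊥
    · refine Or.inl ⟨?_, hW1bot⟩
      rw [eq_bot_iff]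
      intro f hf
      have := h01 f hf
      rw [hW1bot] at this
      simpa using this
    · obtain ⟨g, hg, hg0⟩ := Submodule.ne_bot_iff W1 |>.mp hW1bot
      have h1 : (1 : Polynomial ℂ) ∈ W1 :=
        aux_one_mem W1 hshift g.natDegree g hg hg0 le_rfl
      have htop : W1 = ⊤ := by
        rw [eq_top_iff]
        intro p _
        simpa using aux_hmul W1 hX p 1 h1
      refine Or.inr ⟨le_antisymm hW0le ?_, htop⟩
      intro p hp
      have hp0 : p.coeff 0 = 0 := by
        rw [coeff_zero_eq_eval_zero]; exact hp
      obtain ⟨q, rfl⟩ := X_dvd_iff.mpr hp0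
      have hq : q ∈ W1 := by rw [htop]; trivial
      have := ((H 0).2 q hq).2
      simpa [g10] using this
end

section
/- For λ, μ ∈ ℂ* and α, β ∈ ℂ, the Ramond modules Ω_R(λ, α) and Ω_R(μ, β) are isomorphic as R-modules if and only if λ = μ and α = β. -/
open Polynomial

/-- An isomorphism of `R`-modules `Ω_R(λ,α) → Ω_R(μ,β)`: a pair of linear equivalences of
the even and odd parts intertwining the actions of all `L_m` and `G_m`. -/
def RModIso (l a mu b : ℂ) : Prop :=
  ∃ (e0 e1 : Polynomial ℂ ≃ₗ[ℂ] Polynomial ℂ), ∀ (m : ℤ) (f : Polynomial ℂ),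
    e0 (l0 l a m f) = l0 mu b m (e0 f)
    ∧ e1 (l1 l a m f) = l1 mu b m (e1 f)
    ∧ e1 (g01 l m f) = g01 mu m (e0 f)
    ∧ e0 (g10 l a m f) = g10 mu b m (e1 f)

/-!
`L₀` acts on both the even and the odd part of `Ω_R(λ,α)` as multiplication by `x²`, and a
linear automorphism of a polynomial ring commuting with multiplication by the variable is
multiplication by a nonzero scalar. So an isomorphism `Ω_R(λ,α) ≅ Ω_R(μ,β)` is given by scalars
`c₀, c₁` on the two parts. Evaluating `G_m` on `1` gives `λ^m c₁ = μ^m c₀`, whence `c₁ = c₀`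
(`m = 0`) and `λ = μ` (`m = 1`); evaluating `L₁` on `1` then gives `x² + α = x² + β`.
-/

namespace Polynomial

theorem linearMap_apply_eq_apply_one_mul {R : Type*} [CommSemiring R] (e : R[X] →ₗ[R] R[X])
    (h : ∀ f, e (X * f) = X * e f) (g : R[X]) : e g = e 1 * g := by
  induction g using Polynomial.induction_on with
  | C a =>
    calc e (C a) = e (a • 1) := by rw [smul_eq_C_mul, mul_one]
      _ = e 1 * C a := by rw [map_smul, smul_eq_C_mul, mul_comm]
  | add p q hp hq => rw [map_add, hp, hq, mul_add]
  | monomial n a ih =>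
    rw [show C a * X ^ (n + 1) = X * (C a * X ^ n) by ring, h, ih]
    ring

theorem exists_ne_zero_linearEquiv_eq_C_mul {K : Type*} [Field K] (e : K[X] ≃ₗ[K] K[X])
    (h : ∀ f, e (X * f) = X * e f) : ∃ c : K, c ≠ 0 ∧ ∀ f, e f = C c * f := by
  have he := linearMap_apply_eq_apply_one_mul e.toLinearMap h
  have hunit : IsUnit (e 1) :=
    .of_mul_eq_one (e.symm 1) (by simpa using (he (e.symm 1)).symm)
  obtain ⟨c, hc, hce⟩ := Polynomial.isUnit_iff.mp hunit
  exact ⟨c, hc.ne_zero, fun f => by rw [hce]; exact he f⟩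

end Polynomial

section RamondAction

variable (l a : ℂ)

theorem l0_zero (f : ℂ[X]) : l0 l a 0 f = X * f := by simp [l0]

theorem l1_zero (f : ℂ[X]) : l1 l a 0 f = X * f := by simp [l1]

theorem l0_one_C (c : ℂ) : l0 l a 1 (C c) = C (l * c) * (X + C a) := by
  simp only [l0, C_comp, zpow_one, Int.cast_one, one_mul, smul_eq_C_mul, C_mul]
  ring

theorem g01_C (m : ℤ) (c : ℂ) : g01 l m (C c) = C (l ^ m * c) := by
  simp [g01, smul_eq_C_mul]

end RamondAction

theorem ramond_iso_iff_general (l mu a b : ℂ) (hmu : mu ≠ 0) :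
    RModIso l a mu b ↔ l = mu ∧ a = b := by
  constructor
  · rintro ⟨e0, e1, h⟩
    obtain ⟨c0, hc0, he0⟩ :=
      exists_ne_zero_linearEquiv_eq_C_mul e0 fun f => by simpa [l0_zero] using (h 0 f).1
    obtain ⟨c1, -, he1⟩ :=
      exists_ne_zero_linearEquiv_eq_C_mul e1 fun f => by simpa [l1_zero] using (h 0 f).2.1
    have hG (m : ℤ) : l ^ m * c1 = mu ^ m * c0 := by
      have := (h m (C 1)).2.2.1
      simp only [he0, he1, ← C_mul, g01_C, C_inj] at this
      linear_combination this
    have hc : c1 = c0 := by simpa using hG 0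
    obtain rfl : l = mu := mul_right_cancel₀ hc0 (by simpa [hc] using hG 1)
    have hL : C (l * c0) * (X + C a) = C (l * c0) * (X + C b) := by
      have := (h 1 (C 1)).1
      simp only [he0, ← C_mul, l0_one_C, mul_one] at this
      rw [← this, C_mul]
      ring
    have hX := mul_left_cancel₀ (C_ne_zero.mpr (mul_ne_zero hmu hc0)) hL
    exact ⟨rfl, by simpa using congrArg (coeff · 0) hX⟩
  · rintro ⟨rfl, rfl⟩
    exact ⟨LinearEquiv.refl ℂ _, LinearEquiv.refl ℂ _, fun m f => ⟨rfl, rfl, rfl, rfl⟩⟩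

/-- `Ω_R(λ,α) ≅ Ω_R(μ,β)` as `R`-modules iff `λ = μ` and `α = β`. -/
theorem ramond_iso_iff (l mu a b : ℂ) (hl : l ≠ 0) (hmu : mu ≠ 0) :
    RModIso l a mu b ↔ l = mu ∧ a = b :=
  ramond_iso_iff_general l mu a b hmu
end

section
/- For λ ∈ ℂ* and α ∈ ℂ, the module Ω_R(λ, α), viewed as a module over the Neveu-Schwarz algebra via the embedding σ(L_m) = (1/2)L_{2m}, σ(G_r) = (1/√2)G_{2r}, is simple as an NS-module if and only if it is simple as an R-module (equivalently, iff α ≠ 0). -/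
open Polynomial

/-- A graded `NS`-submodule of `Ω_R(λ,α)`, where the Neveu-Schwarz algebra acts through
the embedding `σ(L_m) = (1/2) L_{2m}`, `σ(G_{k+1/2}) = (1/√2) G_{2k+1}`. -/
def NSSubOnR (l a : ℂ) (W0 W1 : Submodule ℂ (Polynomial ℂ)) : Prop :=
  ∀ k : ℤ,
    (∀ f ∈ W0, (1/2 : ℂ) • l0 l a (2 * k) f ∈ W0
      ∧ ((Real.sqrt 2 : ℂ))⁻¹ • g01 l (2 * k + 1) f ∈ W1)
    ∧ (∀ g ∈ W1, (1/2 : ℂ) • l1 l a (2 * k) g ∈ W1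
      ∧ ((Real.sqrt 2 : ℂ))⁻¹ • g10 l a (2 * k + 1) g ∈ W0)

/-! ### Auxiliary lemmas -/

lemma aux_const_mem (W : Submodule ℂ (Polynomial ℂ))
    (hW : ∀ q ∈ W, q.comp (X + C 2) ∈ W) :
    ∀ (n : ℕ) (f : Polynomial ℂ), f.natDegree ≤ n → f ∈ W → f ≠ 0 →
      ∃ c : ℂ, c ≠ 0 ∧ C c ∈ W := by
  intro n
  induction n with
  | zero =>
    intro f hdeg hf hf0
    have hfc : f = C (f.coeff 0) := Polynomial.eq_C_of_natDegree_le_zero hdeg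
    refine ⟨f.coeff 0, fun h => hf0 (by rw [hfc, h, map_zero]), hfc ▸ hf⟩
  | succ n ih =>
    intro f hdeg hf hf0
    set g := f.comp (X + C 2) - f with hgdef
    have hgW : g ∈ W := sub_mem (hW f hf) hf
    by_cases hg : g = 0
    · have hcomp : f.comp (X + C 2) = f := sub_eq_zero.mp hg
      have hev : ∀ m : ℕ, f.eval (2 * (m:ℂ)) = f.eval 0 := by
        intro m
        induction m with
        | zero => simp
        | succ m ihm =>
          have h1 : (f.comp (X + C 2)).eval (2 * (m:ℂ)) = f.eval (2 * (m:ℂ) + 2) := by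
            simp [eval_comp]
          rw [hcomp] at h1
          have h2 : (2:ℂ) * ((m+1:ℕ):ℂ) = 2*(m:ℂ) + 2 := by push_cast; ring
          rw [h2, ← h1, ihm]
      have hzero : f - C (f.eval 0) = 0 := by
        apply Polynomial.eq_zero_of_infinite_isRoot
        have hinj : Function.Injective (fun m : ℕ => (2 * (m:ℂ) : ℂ)) := by
          intro i j hij
          simp only at hij
          have : (i:ℂ) = j := mul_left_cancel₀ two_ne_zero hij
          exact_mod_cast this
        apply (Set.infinite_range_of_injective hinj).mono
        rintro x ⟨m, rfl⟩
        simp [Polynomial.IsRoot, hev m]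
      have hfc : f = C (f.eval 0) := sub_eq_zero.mp hzero
      refine ⟨f.eval 0, fun h => hf0 (by rw [hfc, h, map_zero]), hfc ▸ hf⟩
    · have hc0 : f.comp (X + C 2) ≠ 0 := comp_X_add_C_ne_zero_iff.mpr hf0
      have hnd : (f.comp (X + C 2)).natDegree = f.natDegree := by
        rw [← taylor_apply, natDegree_taylor]
      have hdeq : (f.comp (X + C 2)).degree = f.degree := by
        rw [degree_eq_natDegree hc0, degree_eq_natDegree hf0, hnd]
      have hlc : (f.comp (X + C 2)).leadingCoeff = f.leadingCoeff := by
        rw [leadingCoeff_comp (by simp : (X + C (2:ℂ)).natDegree ≠ 0)]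
        simp [(monic_X_add_C (2:ℂ)).leadingCoeff]
      have hdlt : g.degree < f.degree := by
        have := degree_sub_lt hdeq hc0 hlc
        rwa [hdeq] at this
      have hlt : g.natDegree < f.natDegree := natDegree_lt_natDegree hg hdlt
      exact ih g (by omega) hgW hg

lemma aux_eq_top (W : Submodule ℂ (Polynomial ℂ))
    (hX : ∀ q ∈ W, X * q ∈ W) {c : ℂ} (hc : c ≠ 0) (hcW : C c ∈ W) : W = ⊤ := by
  have hmon : ∀ n : ℕ, X ^ n * C c ∈ W := by
    intro n; induction n with
    | zero => simpa using hcW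
    | succ n ih =>
      have h2 := hX _ ih
      have h3 : X ^ (n+1) * C c = X * (X ^ n * C c) := by ring
      rwa [h3]
  rw [eq_top_iff]
  rintro p -
  induction p using Polynomial.induction_on' with
  | add p q hp hq => exact add_mem hp hq
  | monomial n b =>
    have h4 : (monomial n b : Polynomial ℂ) = (b / c) • (X ^ n * C c) := by
      rw [mul_comm, C_mul_X_pow_eq_monomial, smul_monomial, smul_eq_mul, div_mul_cancel₀ _ hc]
    rw [h4]
    exact Submodule.smul_mem _ _ (hmon n)

lemma comp_shift_shift (f : Polynomial ℂ) (b c : ℂ) :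
    (f.comp (X + C b)).comp (X + C c) = f.comp (X + C (b + c)) := by
  rw [comp_assoc]
  simp only [add_comp, X_comp, C_comp, add_assoc, ← C_add, add_comm b c]

lemma aux_rsub_nssub {l a : ℂ} {W0 W1 : Submodule ℂ (Polynomial ℂ)}
    (h : RSub l a W0 W1) : NSSubOnR l a W0 W1 := by
  intro k
  exact ⟨fun f hf => ⟨Submodule.smul_mem _ _ (((h (2*k)).1 f hf).1),
      Submodule.smul_mem _ _ (((h (2*k+1)).1 f hf).2)⟩,
    fun g hg => ⟨Submodule.smul_mem _ _ (((h (2*k)).2 g hg).1),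
      Submodule.smul_mem _ _ (((h (2*k+1)).2 g hg).2)⟩⟩

/-- The kernel of evaluation at `0`, a proper nonzero submodule when `α = 0`. -/
noncomputable def evalZeroKer : Submodule ℂ (Polynomial ℂ) where
  carrier := {p | p.eval 0 = 0}
  add_mem' := by
    intro p q hp hq
    simp only [Set.mem_setOf_eq, eval_add] at *
    rw [hp, hq, add_zero]
  zero_mem' := by simp
  smul_mem' := by
    intro c p hp
    simp only [Set.mem_setOf_eq, eval_smul, smul_eq_mul] at *
    rw [hp, mul_zero]

lemma mem_evalZeroKer {p : Polynomial ℂ} : p ∈ evalZeroKer ↔ p.eval 0 = 0 := Iff.rfl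

lemma aux_rsub_zero (l : ℂ) : RSub l 0 evalZeroKer ⊤ := by
  intro m
  constructor
  · intro f hf
    refine ⟨?_, Submodule.mem_top⟩
    rw [mem_evalZeroKer]
    simp [l0]
  · intro g hg
    refine ⟨Submodule.mem_top, ?_⟩
    rw [mem_evalZeroKer]
    simp [g10]

lemma aux_not_r_simple (l : ℂ) :
    ¬ (∀ W0 W1 : Submodule ℂ (Polynomial ℂ), RSub l 0 W0 W1 →
        (W0 = ⊥ ∧ W1 = ⊥) ∨ (W0 = ⊤ ∧ W1 = ⊤)) := by
  intro h
  rcases h evalZeroKer ⊤ (aux_rsub_zero l) with ⟨h1, -⟩ | ⟨h1, -⟩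
  · have hX : (X : Polynomial ℂ) ∈ evalZeroKer := by rw [mem_evalZeroKer]; simp
    rw [h1, Submodule.mem_bot] at hX
    exact X_ne_zero hX
  · have hone : (1 : Polynomial ℂ) ∈ evalZeroKer := h1 ▸ Submodule.mem_top
    rw [mem_evalZeroKer] at hone
    simp at hone

lemma aux_ns_simple {l a : ℂ} (hl : l ≠ 0) (ha : a ≠ 0)
    {W0 W1 : Submodule ℂ (Polynomial ℂ)} (h : NSSubOnR l a W0 W1) :
    (W0 = ⊥ ∧ W1 = ⊥) ∨ (W0 = ⊤ ∧ W1 = ⊤) := by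
  have hs2 : ((Real.sqrt 2 : ℝ) : ℂ)⁻¹ ≠ 0 := by
    apply inv_ne_zero
    exact_mod_cast Real.sqrt_ne_zero'.mpr (by norm_num)
  have hlz : ∀ m : ℤ, (l : ℂ) ^ m ≠ 0 := fun m => zpow_ne_zero m hl
  have hB : ∀ (k : ℤ) (f), f ∈ W0 → f.comp (X + C ((2*k+1 : ℤ) : ℂ)) ∈ W1 := by
    intro k f hf
    have h1 := ((h k).1 f hf).2
    rw [g01, Submodule.smul_mem_iff _ hs2, Submodule.smul_mem_iff _ (hlz _)] at h1
    exact h1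
  have hA : ∀ (k : ℤ) (f), f ∈ W0 →
      (X + C (((2*k : ℤ):ℂ) * a)) * f.comp (X + C ((2*k:ℤ):ℂ)) ∈ W0 := by
    intro k f hf
    have h1 := ((h k).1 f hf).1
    rw [l0, Submodule.smul_mem_iff _ (by norm_num : (1/2:ℂ) ≠ 0),
      Submodule.smul_mem_iff _ (hlz _)] at h1
    exact h1
  have hD : ∀ (k : ℤ) (g), g ∈ W1 →
      (X + C (2 * ((2*k+1:ℤ):ℂ) * a)) * g.comp (X + C ((2*k+1:ℤ):ℂ)) ∈ W0 := by
    intro k g hg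
    have h1 := ((h k).2 g hg).2
    rw [g10, Submodule.smul_mem_iff _ hs2, Submodule.smul_mem_iff _ (hlz _)] at h1
    exact h1
  have hX0 : ∀ f ∈ W0, X * f ∈ W0 := by
    intro f hf
    have h1 := hA 0 f hf
    simpa using h1
  have hshift2 : ∀ f ∈ W0, f.comp (X + C 2) ∈ W0 := by
    intro f hf
    have e1 : (X + C (2*a)) * f.comp (X + C 2) ∈ W0 := by
      have h1 := hD 0 _ (hB 0 f hf)
      rw [comp_shift_shift] at h1
      have c1 : ((2*0+1 : ℤ) : ℂ) = 1 := by norm_num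
      rw [c1] at h1
      have c2 : (2:ℂ) * 1 * a = 2*a := by ring
      have c3 : (1:ℂ) + 1 = 2 := by norm_num
      rwa [c2, c3] at h1
    have e2 : (X + C (2*a) + C (4*a)) * f.comp (X + C 2) ∈ W0 := by
      have h1 := hD 1 _ (hB (-1) f hf)
      rw [comp_shift_shift] at h1
      have c1 : ((2*(-1)+1 : ℤ) : ℂ) = -1 := by norm_num
      have c2 : ((2*1+1 : ℤ) : ℂ) = 3 := by norm_num
      rw [c1, c2] at h1
      have c3 : (-1:ℂ) + 3 = 2 := by norm_num
      have c4 : X + C (2 * (3:ℂ) * a) = X + C (2*a) + C (4*a) := by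
        rw [add_assoc, ← C_add]
        congr 1
        ring
      rwa [c3, c4] at h1
    have e3 : (4*a) • (f.comp (X + C 2)) ∈ W0 := by
      have h1 := W0.sub_mem e2 e1
      have heq : (X + C (2*a) + C (4*a)) * f.comp (X + C 2)
          - (X + C (2*a)) * f.comp (X + C 2) = C (4*a) * f.comp (X + C 2) := by ring
      rw [heq, ← smul_eq_C_mul] at h1
      exact h1
    exact (Submodule.smul_mem_iff _ (mul_ne_zero (by norm_num) ha)).mp e3
  by_cases h0 : W0 = ⊥
  · by_cases h1 : W1 = ⊥
    · exact Or.inl ⟨h0, h1⟩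
    · exfalso
      obtain ⟨g, hg, hg0⟩ := Submodule.exists_mem_ne_zero_of_ne_bot h1
      have hd := hD 0 g hg
      rw [h0, Submodule.mem_bot] at hd
      exact mul_ne_zero (X_add_C_ne_zero _) (comp_X_add_C_ne_zero_iff.mpr hg0) hd
  · obtain ⟨f, hf, hf0⟩ := Submodule.exists_mem_ne_zero_of_ne_bot h0
    obtain ⟨c, hc, hcW⟩ := aux_const_mem W0 hshift2 f.natDegree f le_rfl hf hf0
    have hW0top : W0 = ⊤ := aux_eq_top W0 hX0 hc hcW
    have hW1top : W1 = ⊤ := by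
      rw [eq_top_iff]
      rintro p -
      have h1 := hB 0 (p.comp (X + C (-1))) (hW0top ▸ Submodule.mem_top)
      rw [comp_shift_shift] at h1
      have c1 : (-1:ℂ) + ((2*0+1 : ℤ) : ℂ) = 0 := by norm_num
      rw [c1] at h1
      simpa using h1
    exact Or.inr ⟨hW0top, hW1top⟩

/-- `Ω_R(λ,α)`, viewed as an `NS`-module via `σ`, is simple as an
`NS`-module iff it is simple as an `R`-module, equivalently iff `α ≠ 0`. -/
theorem ns_simple_iff_r_simple (l a : ℂ) (hl : l ≠ 0) :
    ((∀ W0 W1 : Submodule ℂ (Polynomial ℂ), NSSubOnR l a W0 W1 →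
        (W0 = ⊥ ∧ W1 = ⊥) ∨ (W0 = ⊤ ∧ W1 = ⊤))
      ↔ (∀ W0 W1 : Submodule ℂ (Polynomial ℂ), RSub l a W0 W1 →
        (W0 = ⊥ ∧ W1 = ⊥) ∨ (W0 = ⊤ ∧ W1 = ⊤)))
    ∧ ((∀ W0 W1 : Submodule ℂ (Polynomial ℂ), NSSubOnR l a W0 W1 →
        (W0 = ⊥ ∧ W1 = ⊥) ∨ (W0 = ⊤ ∧ W1 = ⊤)) ↔ a ≠ 0) := by
  have hNS_of_a : a ≠ 0 → (∀ W0 W1 : Submodule ℂ (Polynomial ℂ), NSSubOnR l a W0 W1 →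
      (W0 = ⊥ ∧ W1 = ⊥) ∨ (W0 = ⊤ ∧ W1 = ⊤)) :=
    fun ha W0 W1 h => aux_ns_simple hl ha h
  have hNS_to_R : (∀ W0 W1 : Submodule ℂ (Polynomial ℂ), NSSubOnR l a W0 W1 →
      (W0 = ⊥ ∧ W1 = ⊥) ∨ (W0 = ⊤ ∧ W1 = ⊤)) →
      (∀ W0 W1 : Submodule ℂ (Polynomial ℂ), RSub l a W0 W1 →
      (W0 = ⊥ ∧ W1 = ⊥) ∨ (W0 = ⊤ ∧ W1 = ⊤)) :=
    fun hNS W0 W1 hR => hNS W0 W1 (aux_rsub_nssub hR)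
  have hR_to_a : (∀ W0 W1 : Submodule ℂ (Polynomial ℂ), RSub l a W0 W1 →
      (W0 = ⊥ ∧ W1 = ⊥) ∨ (W0 = ⊤ ∧ W1 = ⊤)) → a ≠ 0 := by
    intro hR ha
    subst ha
    exact aux_not_r_simple l hR
  constructor
  · exact ⟨hNS_to_R, fun hR => hNS_of_a (hR_to_a hR)⟩
  · exact ⟨fun hNS => hR_to_a (hNS_to_R hNS), hNS_of_a⟩
end

section
/- For λ ∈ ℂ* and α ∈ ℂ, there is an isomorphism of NS-modules Ω_NS(λ, α) ≅ Ω_R(√λ, α) (the latter viewed as an NS-module via σ(L_m) = (1/2)L_{2m}, σ(G_r) = (1/√2)G_{2r}), given explicitly by f(x) ↦ f(x²/2) and g(y) ↦ (√λ/√2)·x·g(x²/2). -/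
open Polynomial

/-- `L_m` on the odd part `ℂ[y]` of `Ω_NS(λ,α)`: `g ↦ λ^m (y + m(α+1/2)) g(y+m)`.
(On the even part `ℂ[x]`, `L_m` acts by `l0 λ α m`.) -/
noncomputable def nl1 (l a : ℂ) (m : ℤ) (g : Polynomial ℂ) : Polynomial ℂ :=
  l ^ m • ((X + C ((m : ℂ) * (a + 1/2))) * g.comp (X + C (m : ℂ)))

/-- `G_r` (`r = k + 1/2`) on the even part of `Ω_NS(λ,α)`: `f(x) ↦ λ^{r−1/2} f(y+r)`. -/
noncomputable def ng01 (l : ℂ) (k : ℤ) (f : Polynomial ℂ) : Polynomial ℂ :=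
  l ^ k • f.comp (X + C ((k : ℂ) + 1/2))

/-- `G_r` (`r = k + 1/2`) on the odd part: `g(y) ↦ λ^{r+1/2} (x + 2rα) g(x+r)`. -/
noncomputable def ng10 (l a : ℂ) (k : ℤ) (g : Polynomial ℂ) : Polynomial ℂ :=
  l ^ (k + 1) • ((X + C (2 * ((k : ℂ) + 1/2) * a)) * g.comp (X + C ((k : ℂ) + 1/2)))

/-- The even component of `Φ : Ω_NS(λ,α) → Ω_R(√λ,α)`, `f(x) ↦ f(x²/2)`
(in the coordinate `t = x²` of the target). -/
noncomputable def Phi0 (f : Polynomial ℂ) : Polynomial ℂ := f.comp (C (1/2 : ℂ) * X)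

/-- The odd component of `Φ`: `g(y) ↦ (√λ/√2)·x·g(x²/2)`. -/
noncomputable def Phi1 (mu : ℂ) (g : Polynomial ℂ) : Polynomial ℂ :=
  (mu / (Real.sqrt 2 : ℂ)) • g.comp (C (1/2 : ℂ) * X)

/-- for `λ ∈ ℂ*` and a fixed square root `μ = √λ`, the map
`Φ : f(x) ↦ f(x²/2), g(y) ↦ (√λ/√2)·x·g(x²/2)` is an isomorphism of `NS`-modules
`Ω_NS(λ,α) ≅ Ω_R(√λ,α)`, the latter viewed as an `NS`-module via the embedding
`σ(L_m) = (1/2) L_{2m}`, `σ(G_r) = (1/√2) G_{2r}`. -/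
theorem omega_ns_iso_omega_r (l a mu : ℂ) (hl : l ≠ 0) (hmu : mu ^ 2 = l) :
    Function.Bijective Phi0 ∧ Function.Bijective (Phi1 mu)
    ∧ ∀ (m k : ℤ) (f g : Polynomial ℂ),
        Phi0 (l0 l a m f) = (1/2 : ℂ) • l0 mu a (2 * m) (Phi0 f)
        ∧ Phi1 mu (nl1 l a m g) = (1/2 : ℂ) • l1 mu a (2 * m) (Phi1 mu g)
        ∧ Phi1 mu (ng01 l k f) = ((Real.sqrt 2 : ℂ))⁻¹ • g01 mu (2 * k + 1) (Phi0 f)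
        ∧ Phi0 (ng10 l a k g) = ((Real.sqrt 2 : ℂ))⁻¹ • g10 mu a (2 * k + 1) (Phi1 mu g) := by
  
  have hs2 : (Real.sqrt 2 : ℂ) * (Real.sqrt 2 : ℂ) = 2 := by
    norm_cast
    rw [Real.mul_self_sqrt (by norm_num)]
  have hsne : (Real.sqrt 2 : ℂ) ≠ 0 := by
    intro h
    rw [h, mul_zero] at hs2
    exact two_ne_zero hs2.symm
  have hmune : mu ≠ 0 := by
    intro h; rw [h] at hmu; simp at hmu; exact hl hmu.symm
  have hz : ∀ n : ℤ, mu ^ (2*n) = l ^ n := by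
    intro n; rw [zpow_mul]; norm_cast; rw [hmu]
  have hz1 : ∀ n : ℤ, mu ^ (2*n+1) = l ^ n * mu := by
    intro n; rw [zpow_add_one₀ hmune, hz]
  refine ⟨?_, ?_, ?_⟩
  · apply Function.bijective_iff_has_inverse.mpr
    refine ⟨fun h => h.comp (C (2:ℂ) * X), fun f => ?_, fun f => ?_⟩ <;>
    · simp only [Phi0, Polynomial.comp_assoc, mul_comp, C_comp, X_comp]
      norm_num [← mul_assoc, ← C_mul]
  · apply Function.bijective_iff_has_inverse.mpr
    refine ⟨fun h => ((Real.sqrt 2 : ℂ) / mu) • h.comp (C (2:ℂ) * X), fun f => ?_,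
      fun f => ?_⟩ <;>
    · simp only [Phi1, Polynomial.smul_comp, smul_smul]
      rw [div_mul_div_comm]
      rw [show (Real.sqrt 2 : ℂ) * mu = mu * (Real.sqrt 2 : ℂ) from mul_comm _ _]
      rw [div_self (by exact mul_ne_zero hmune hsne), one_smul]
      simp only [Polynomial.comp_assoc, mul_comp, C_comp, X_comp]
      norm_num [← mul_assoc, ← C_mul]
  · intro m k f g
    refine ⟨?_, ?_, ?_, ?_⟩
    · apply Polynomial.funext; intro x
      simp only [l0, Phi0, eval_smul, eval_mul, eval_comp, eval_add, eval_X, eval_C,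
        smul_eq_mul, hz]
      push_cast
      ring_nf
    · apply Polynomial.funext; intro x
      simp only [nl1, l1, Phi1, eval_smul, eval_mul, eval_comp, eval_add, eval_X, eval_C,
        smul_eq_mul, hz]
      push_cast
      ring_nf
    · apply Polynomial.funext; intro x
      simp only [ng01, g01, Phi0, Phi1, eval_smul, eval_mul, eval_comp, eval_add, eval_X,
        eval_C, smul_eq_mul, hz1]
      push_cast
      field_simp
    · apply Polynomial.funext; intro x
      simp only [ng10, g10, Phi0, Phi1, eval_smul, eval_mul, eval_comp, eval_add, eval_X,
        eval_C, smul_eq_mul, hz1, zpow_add_one₀ hl]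
      push_cast
      ring_nf
      rw [← hmu]
      field_simp
      ring_nf
      simp only [show ((Real.sqrt 2:ℂ))^2 = 2 from by rw [sq, hs2]]
      ring
end

section
/- The Neveu-Schwarz algebra NS admits no nontrivial module that is free of rank 1 over U(𝔥) = ℂ[L_0]: if M is an NS-module that is free of rank 1 over ℂ[L_0], or more generally free of rank 2 with two homogeneous basis vectors of the same parity, then G_{±1/2} annihilates the basis vectors, forcing L_0 to act as 0 on them, a contradiction with freeness. -/
open Polynomial

/-- A representation of the Neveu-Schwarz algebra `NS` on a `ℤ₂`-graded complex vector
space `M = M0 ⊕ M1`: `LE`/`LO` are the actions of `L_m` on the even/odd part, and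
`GEO k`/`GOE k` the actions of `G_{k+1/2}` (`k ∈ ℤ`) from even to odd and back.
The axioms are `[L_m,L_n]=(m−n)L_{m+n}`, `[L_m,G_r]=(m/2−r)G_{m+r}`,
`[G_r,G_s]=2L_{r+s}` (an anticommutator), with `r = k+1/2`, `s = j+1/2`. -/
structure NSRep (M0 M1 : Type*) [AddCommGroup M0] [Module ℂ M0]
    [AddCommGroup M1] [Module ℂ M1] where
  LE : ℤ → M0 →ₗ[ℂ] M0
  LO : ℤ → M1 →ₗ[ℂ] M1
  GEO : ℤ → M0 →ₗ[ℂ] M1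
  GOE : ℤ → M1 →ₗ[ℂ] M0
  ll_e : ∀ (m n : ℤ) (v : M0),
    LE m (LE n v) - LE n (LE m v) = ((m - n : ℤ) : ℂ) • LE (m + n) v
  ll_o : ∀ (m n : ℤ) (w : M1),
    LO m (LO n w) - LO n (LO m w) = ((m - n : ℤ) : ℂ) • LO (m + n) w
  lg_e : ∀ (m k : ℤ) (v : M0),
    LO m (GEO k v) - GEO k (LE m v) = ((m : ℂ) / 2 - ((k : ℂ) + 1/2)) • GEO (m + k) v
  lg_o : ∀ (m k : ℤ) (w : M1),
    LE m (GOE k w) - GOE k (LO m w) = ((m : ℂ) / 2 - ((k : ℂ) + 1/2)) • GOE (m + k) w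
  gg_e : ∀ (k j : ℤ) (v : M0),
    GOE k (GEO j v) + GOE j (GEO k v) = (2 : ℂ) • LE (k + j + 1) v
  gg_o : ∀ (k j : ℤ) (w : M1),
    GEO k (GOE j w) + GEO j (GOE k w) = (2 : ℂ) • LO (k + j + 1) w

/-- the Neveu-Schwarz algebra admits no nontrivial module that is free of
rank 1 over `U(𝔥) = ℂ[L_0]`.  Indeed, if all homogeneous basis vectors lie in one parity
component (so the other component `M1` is zero — this covers both the rank-1 case and the
rank-2 case with two basis vectors of the same parity), then `G_{±1/2}` kills the basis
vectors, forcing `L_0` to act as `0` on them, contradicting freeness (here expressed by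
injectivity of `f ↦ f(L_0)·v` for a basis vector `v`). -/
theorem ns_no_free_rank_one (M0 M1 : Type*)
    [AddCommGroup M0] [Module ℂ M0] [AddCommGroup M1] [Module ℂ M1]
    (ρ : NSRep M0 M1) (hM1 : Subsingleton M1) (v : M0)
    (hv : Function.Injective fun f : Polynomial ℂ => Polynomial.aeval (ρ.LE 0) f v) :
    False := by
  have h0 : ρ.LE 0 v = 0 := by
    have h := ρ.gg_e (-1) 0 v
    have e1 : ρ.GEO 0 v = 0 := Subsingleton.elim _ _
    have e2 : ρ.GEO (-1) v = 0 := Subsingleton.elim _ _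
    rw [e1, e2, map_zero, map_zero] at h
    rw [add_zero] at h
    have := smul_eq_zero.mp h.symm
    simpa using this
  have : (X : Polynomial ℂ) = 0 := by
    apply hv
    simp [h0]
  exact X_ne_zero this
end

section
/- Let M = ℂ[x]𝟏₀ ⊕ ℂ[y]𝟏₁ be an NS-module free of rank 2 over ℂ[L_0] with homogeneous basis 𝟏₀ (even), 𝟏₁ (odd), such that L_m h(x)𝟏₀ = λ^m(x+mα)h(x+m)𝟏₀ and L_m h(y)𝟏₁ = μ^m(y+mβ)h(y+m)𝟏₁ for λ, μ ∈ ℂ*, α, β ∈ ℂ. Then μ = λ and there exists c ∈ ℂ* such that either (i) β = α + 1/2, G_{1/2}𝟏₀ = c𝟏₁ and G_{1/2}𝟏₁ = (λ/c)(x+α)𝟏₀, or (ii) β = α − 1/2, G_{1/2}𝟏₀ = (λ/c)(y+α−1/2)𝟏₁ and G_{1/2}𝟏₁ = c𝟏₀. -/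
open Polynomial

/-- If a ℂ-linear map on ℂ[X] sends `X*f` to `(X+1/2)*T f`, it is
`f ↦ f(X+1/2) * T 1`. -/
lemma shift_rule (T : Polynomial ℂ →ₗ[ℂ] Polynomial ℂ)
    (h : ∀ f, T (X * f) = (X + C (1/2 : ℂ)) * T f) (f : Polynomial ℂ) :
    T f = f.comp (X + C (1/2 : ℂ)) * T 1 := by
  induction f using Polynomial.induction_on with
  | C c =>
      have : (C c : Polynomial ℂ) = c • 1 := by rw [smul_eq_C_mul, mul_one]
      rw [this, map_smul, smul_eq_C_mul]
      simp [smul_eq_C_mul]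
  | add p q hp hq => rw [map_add, hp, hq, add_comp]; ring
  | monomial n c ih =>
      have e1 : (C c * X ^ (n + 1) : Polynomial ℂ) = X * (C c * X ^ n) := by ring
      rw [e1, h, ih]
      simp only [mul_comp, C_comp, X_comp, pow_comp]
      ring

lemma coeffs_eq {p q r s : ℂ} (h : C p * (X + C q) = C r * (X + C s)) :
    p = r ∧ p * q = r * s := by
  constructor
  · have := congrArg (fun f => Polynomial.coeff f 1) h
    simpa using this
  · have := congrArg (fun f => Polynomial.coeff f 0) h
    simpa using this

lemma half_eq {S R : Polynomial ℂ} (h : S + S = R + R) : S = R := by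
  have h2 : (2 : Polynomial ℂ) * S = 2 * R := by ring_nf; linear_combination h
  exact mul_left_cancel₀ two_ne_zero h2


/-- let `M = ℂ[x]𝟏₀ ⊕ ℂ[y]𝟏₁` be an `NS`-module, free of rank 2 over
`ℂ[L_0]` with homogeneous basis `𝟏₀` (even), `𝟏₁` (odd), such that
`L_m h(x)𝟏₀ = λ^m (x+mα) h(x+m)𝟏₀` and `L_m h(y)𝟏₁ = μ^m (y+mβ) h(y+m)𝟏₁`.
Then `μ = λ` and there is `c ∈ ℂ*` with either
(i) `β = α + 1/2`, `G_{1/2}𝟏₀ = c𝟏₁`, `G_{1/2}𝟏₁ = (λ/c)(x+α)𝟏₀`, or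
(ii) `β = α − 1/2`, `G_{1/2}𝟏₀ = (λ/c)(y+α−1/2)𝟏₁`, `G_{1/2}𝟏₁ = c𝟏₀`.
(`G_{1/2}` is `GEO 0`/`GOE 0` in the index convention `r = k + 1/2`.) -/
theorem ns_key_lemma (l mu a b : ℂ) (hl : l ≠ 0) (hmu : mu ≠ 0)
    (ρ : NSRep (Polynomial ℂ) (Polynomial ℂ))
    (hLE : ∀ (m : ℤ) (f : Polynomial ℂ), ρ.LE m f = l0 l a m f)
    (hLO : ∀ (m : ℤ) (g : Polynomial ℂ),
      ρ.LO m g = mu ^ m • ((X + C ((m : ℂ) * b)) * g.comp (X + C (m : ℂ)))) :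
    mu = l ∧ ∃ c : ℂ, c ≠ 0 ∧
      ((b = a + 1/2 ∧ ρ.GEO 0 1 = C c ∧ ρ.GOE 0 1 = (l / c) • (X + C a))
        ∨ (b = a - 1/2 ∧ ρ.GEO 0 1 = (l / c) • (X + C (a - 1/2)) ∧ ρ.GOE 0 1 = C c)) := by
  set u : Polynomial ℂ := X + C (1/2 : ℂ) with hu
  -- multiplication rules
  have hAe : ∀ f, ρ.GEO 0 (X * f) = u * ρ.GEO 0 f := by
    have h := ρ.lg_e 0 0
    simp only [hLO, hLE, l0] at h
    norm_num at h
    intro f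
    have hf := h f
    rw [smul_eq_C_mul] at hf
    rw [hu]; linear_combination -hf
  have hAo : ∀ g, ρ.GOE 0 (X * g) = u * ρ.GOE 0 g := by
    have h := ρ.lg_o 0 0
    simp only [hLO, hLE, l0] at h
    norm_num at h
    intro g
    have hg := h g
    rw [smul_eq_C_mul] at hg
    rw [hu]; linear_combination -hg
  have hGEO : ∀ f, ρ.GEO 0 f = f.comp u * ρ.GEO 0 1 := shift_rule _ hAe
  have hGOE : ∀ g, ρ.GOE 0 g = g.comp u * ρ.GOE 0 1 := shift_rule _ hAo
  -- the two key equations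
  have hD : (ρ.GEO 0 1).comp u * ρ.GOE 0 1 = C l * (X + C a) := by
    have h := ρ.gg_e 0 0 1
    rw [hGOE (ρ.GEO 0 1), hLE, l0] at h
    simp only [show ((0:ℤ)+0+1) = (1:ℤ) from rfl, zpow_one, Int.cast_one, one_mul,
      one_comp, mul_one, two_smul, smul_eq_C_mul] at h
    exact half_eq h
  have hE : (ρ.GOE 0 1).comp u * ρ.GEO 0 1 = C mu * (X + C b) := by
    have h := ρ.gg_o 0 0 1
    rw [hGEO (ρ.GOE 0 1), hLO] at h
    simp only [show ((0:ℤ)+0+1) = (1:ℤ) from rfl, zpow_one, Int.cast_one, one_mul,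
      one_comp, mul_one, two_smul, smul_eq_C_mul] at h
    exact half_eq h
  clear hGEO hGOE hAe hAo hLE hLO
  set P : Polynomial ℂ := ρ.GEO 0 1 with hP
  set Q : Polynomial ℂ := ρ.GOE 0 1 with hQ
  clear_value P Q
  clear hP hQ
  -- degree bookkeeping
  have hRne : C l * (X + C a) ≠ 0 := by
    intro h0
    have := congrArg (fun f => Polynomial.coeff f 1) h0
    simp [hl] at this
  have hPQne : P.comp u * Q ≠ 0 := hD ▸ hRne
  have hPcne : P.comp u ≠ 0 := left_ne_zero_of_mul hPQne
  have hQne : Q ≠ 0 := right_ne_zero_of_mul hPQne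
  have hPne : P ≠ 0 := by
    intro h0; apply hPcne; rw [h0, zero_comp]
  have hdu : u.natDegree = 1 := by rw [hu]; exact natDegree_X_add_C _
  have hdPc : (P.comp u).natDegree = P.natDegree := by
    rw [natDegree_comp, hdu, mul_one]
  have hdR : (C l * (X + C a)).natDegree = 1 := by
    rw [natDegree_C_mul hl, natDegree_X_add_C]
  have hdsum : P.natDegree + Q.natDegree = 1 := by
    rw [← hdPc, ← natDegree_mul hPcne hQne, hD, hdR]
  rcases Nat.eq_zero_or_pos P.natDegree with hP0 | hP1
  · -- case (i): P = C c
    set c : ℂ := P.coeff 0 with hc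
    have hPc : P = C c := (Polynomial.eq_C_of_natDegree_eq_zero hP0)
    have hcne : c ≠ 0 := by
      intro h0; apply hPne; rw [hPc, h0, map_zero]
    have key : (C (l / c) : Polynomial ℂ) * C c = C l := by
      rw [← C_mul, div_mul_cancel₀ l hcne]
    have hQval : Q = C (l / c) * (X + C a) := by
      refine mul_left_cancel₀ (show (C c : Polynomial ℂ) ≠ 0 by simpa using hcne) ?_
      have h1 : C c * Q = C l * (X + C a) := by rw [← hD, hPc, C_comp]
      rw [h1]; linear_combination (-(C a + X)) * key
    have hEq : C l * (X + C (a + 1/2)) = C mu * (X + C b) := by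
      rw [← hE, hQval, hPc, hu]
      simp only [mul_comp, add_comp, C_comp, X_comp, C_add]
      linear_combination (-(X + C (1/2 : ℂ) + C a)) * key
    obtain ⟨hml, hab⟩ := coeffs_eq hEq
    refine ⟨hml.symm, c, hcne, Or.inl ⟨?_, hPc, ?_⟩⟩
    · have h5 : l * (a + 1/2) = l * b := by rw [hab, hml]
      exact (mul_left_cancel₀ hl h5).symm
    · rw [hQval, smul_eq_C_mul]
  · -- case (ii): Q = C c
    have hQ0 : Q.natDegree = 0 := by omega
    set c : ℂ := Q.coeff 0 with hc
    have hQc : Q = C c := (Polynomial.eq_C_of_natDegree_eq_zero hQ0)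
    have hcne : c ≠ 0 := by
      intro h0; apply hQne; rw [hQc, h0, map_zero]
    have key : (C (l / c) : Polynomial ℂ) * C c = C l := by
      rw [← C_mul, div_mul_cancel₀ l hcne]
    have hPcomp : P.comp u = C (l / c) * (X + C a) := by
      refine mul_right_cancel₀ (show (C c : Polynomial ℂ) ≠ 0 by simpa using hcne) ?_
      have h1 : P.comp u * C c = C l * (X + C a) := by rw [← hD, hQc]
      rw [h1]; linear_combination (-(X + C a)) * key
    have hPval : P = C (l / c) * (X + C (a - 1/2)) := by
      have h3 : P = (P.comp u).comp (X - C (1/2 : ℂ)) := by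
        rw [comp_assoc, hu]
        simp
      rw [h3, hPcomp]
      simp only [mul_comp, add_comp, sub_comp, C_comp, X_comp, C_sub]
      ring
    have hEq : C l * (X + C (a - 1/2)) = C mu * (X + C b) := by
      rw [← hE, hQc, hPval, C_comp]
      linear_combination (-(X + C (a - 1/2 : ℂ))) * key
    obtain ⟨hml, hab⟩ := coeffs_eq hEq
    refine ⟨hml.symm, c, hcne, Or.inr ⟨?_, ?_, hQc⟩⟩
    · have h5 : l * (a - 1/2) = l * b := by rw [hab, hml]
      have := mul_left_cancel₀ hl h5
      exact this.symm
    · rw [hPval, smul_eq_C_mul]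
end
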